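/- arXiv:1507.03266 — 7 statements merged into one kernel-verified Lean document; each statement's English description precedes it below -/
import Mathlib

section
/- Fix u ∈ ℝ^m, θ ∈ ℝ^p and ε ≥ 0, and suppose Assumption A1 holds for this (u,θ). Then the set C(u,θ,ε) = { (x,λ) ∈ ℝ^d × ℝ^q : λ ≥ 0, g(x,u,θ) ≤ ε componentwise, and f(x,u,θ) ≤ f(x',u,θ) + ⟨λ, g(x',u,θ)⟩ + ε for all x' ∈ ℝ^d } is a convex subset of ℝ^d × ℝ^q. Consequently, for fixed θ, the (regularized) duality-based problem — minimizing the convex objective (1/n) Σ_{i=1}^n ‖y_i − x_i‖² over ((x_1,λ_1),…,(x_n,λ_n)) with (x_i,λ_i) ∈ C(u_i,θ,ε) for each i — is a convex optimization problem (its feasible set is convex and its objective is convex). -/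
open Set Metric Filter MeasureTheory ProbabilityTheory

noncomputable section

/-- Euclidean space ℝ^k. -/
abbrev Euc (k : ℕ) := EuclideanSpace ℝ (Fin k)

/-- The duality-based constraint set `C(u,θ,ε)` of pairs `(x,λ)` with `λ ≥ 0`,
`g(x,u,θ) ≤ ε` componentwise, and `f(x,u,θ) − h(λ,u,θ) ≤ ε`. -/
def DualFeas {d m p q : ℕ} (f : Euc d → Euc m → Euc p → ℝ)
    (g : Euc d → Euc m → Euc p → Fin q → ℝ) (uu : Euc m) (θ : Euc p) (ε : ℝ) :
    Set (Euc d × (Fin q → ℝ)) :=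
  {xl | (∀ j, 0 ≤ xl.2 j) ∧ (∀ j, g xl.1 uu θ j ≤ ε) ∧
    ∀ x' : Euc d, f xl.1 uu θ ≤ f x' uu θ + ∑ j, xl.2 j * g x' uu θ j + ε}

/-!
For each `x'`, the duality-gap constraint reads `f(x) - ⟨λ, g(x')⟩ ≤ f(x') + ε`; its left side is
convex in `x` and linear in `λ`, hence jointly convex in `(x, λ)`. So `C(u,θ,ε)` is an intersection
of sublevel sets of convex functions, the feasible set of the fitting problem is a product of such
sets, and the objective is a sum of squared distances composed with linear projections.
-/

lemma ConvexOn.sum {𝕜 E β ι : Type*} [Semiring 𝕜] [PartialOrder 𝕜]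
    [AddCommMonoid E] [AddCommMonoid β] [PartialOrder β] [IsOrderedAddMonoid β]
    [SMul 𝕜 E] [Module 𝕜 β] [PosSMulMono 𝕜 β] {s : Set E} (hs : Convex 𝕜 s)
    (t : Finset ι) {f : ι → E → β} (hf : ∀ i ∈ t, ConvexOn 𝕜 s (f i)) :
    ConvexOn 𝕜 s fun x => ∑ i ∈ t, f i x := by
  simpa only [Finset.sum_fn] using
    Finset.sum_induction f (ConvexOn 𝕜 s) (fun _ _ => ConvexOn.add) (convexOn_const 0 hs) hf

section DualFeasible

variable {E ι : Type*} [AddCommGroup E] [Module ℝ E] [Fintype ι]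

theorem convex_dualFeasible {f : E → ℝ} {g : ι → E → ℝ} (hf : ConvexOn ℝ univ f)
    (hg : ∀ j, ConvexOn ℝ univ (g j)) (ε : ℝ) :
    Convex ℝ {xl : E × (ι → ℝ) | (∀ j, 0 ≤ xl.2 j) ∧ (∀ j, g j xl.1 ≤ ε) ∧
      ∀ x', f xl.1 ≤ f x' + ∑ j, xl.2 j * g j x' + ε} := by
  simp only [ofPred_and, ofPred_forall]
  refine (convex_iInter fun j => ?_).inter
    ((convex_iInter fun j => ?_).inter (convex_iInter fun x' => ?_))
  · exact convex_halfSpace_ge (LinearMap.proj j ∘ₗ LinearMap.snd ℝ E (ι → ℝ)).isLinear 0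
  · simpa using ((hg j).comp_linearMap (LinearMap.fst ℝ E (ι → ℝ))).convex_le ε
  · let pairing := Fintype.linearCombination ℝ (fun j => g j x') ∘ₗ LinearMap.snd ℝ E (ι → ℝ)
    have h := ((hf.comp_linearMap (LinearMap.fst ℝ E (ι → ℝ))).sub
      (pairing.concaveOn convex_univ)).convex_le (f x' + ε)
    simp only [pairing, preimage_univ, mem_univ, true_and, Pi.sub_apply, Function.comp_apply,
      LinearMap.coe_comp, LinearMap.coe_fst, LinearMap.coe_snd, Fintype.linearCombination_apply,
      smul_eq_mul, sub_le_iff_le_add] at h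
    simpa only [add_right_comm _ ε] using h

end DualFeasible

theorem convex_dualFeas {d m p q : ℕ} {f : Euc d → Euc m → Euc p → ℝ}
    {g : Euc d → Euc m → Euc p → Fin q → ℝ} {uu : Euc m} {θ : Euc p}
    (hf : ConvexOn ℝ univ fun x => f x uu θ) (hg : ∀ j, ConvexOn ℝ univ fun x => g x uu θ j)
    (ε : ℝ) : Convex ℝ (DualFeas f g uu θ ε) :=
  convex_dualFeasible hf hg ε

theorem convexOn_sum_norm_sub_fst_sq {ι F G : Type*} [Fintype ι] [NormedAddCommGroup F]
    [NormedSpace ℝ F] [AddCommGroup G] [Module ℝ G] (y : ι → F) :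
    ConvexOn ℝ univ fun X : ι → F × G => ∑ i, ‖y i - (X i).1‖ ^ 2 := by
  refine ConvexOn.sum convex_univ _ fun i _ => ?_
  have hsq : ConvexOn ℝ univ fun x : F => ‖y i - x‖ ^ 2 := by
    have := (convexOn_dist (y i) convex_univ).pow (fun _ _ => dist_nonneg) 2
    simp_rw [dist_eq_norm'] at this
    exact this
  exact hsq.comp_linearMap (LinearMap.fst ℝ F G ∘ₗ LinearMap.proj (φ := fun _ : ι => F × G) i)

theorem statement2_general {d m p q : ℕ} (n : ℕ)
    (f : Euc d → Euc m → Euc p → ℝ) (g : Euc d → Euc m → Euc p → Fin q → ℝ)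
    (θ : Euc p) (ε : ℝ)
    -- A1: for each fixed (u, θ), continuity and convexity in x
    (hf_conv : ∀ uu : Euc m, ConvexOn ℝ Set.univ fun x => f x uu θ)
    (hg_conv : ∀ (uu : Euc m) (j : Fin q), ConvexOn ℝ Set.univ fun x => g x uu θ j)
    -- data
    (u : Fin n → Euc m) (y : Fin n → Euc d) :
    (∀ uu : Euc m, Convex ℝ (DualFeas f g uu θ ε)) ∧
    Convex ℝ {X : Fin n → Euc d × (Fin q → ℝ) | ∀ i, X i ∈ DualFeas f g (u i) θ ε} ∧
    ConvexOn ℝ {X : Fin n → Euc d × (Fin q → ℝ) | ∀ i, X i ∈ DualFeas f g (u i) θ ε}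
      (fun X => (1 / n : ℝ) * ∑ i, ‖y i - (X i).1‖ ^ 2) := by
  have hC (uu : Euc m) : Convex ℝ (DualFeas f g uu θ ε) :=
    convex_dualFeas (hf_conv uu) (hg_conv uu) ε
  have hfeas :
      Convex ℝ {X : Fin n → Euc d × (Fin q → ℝ) | ∀ i, X i ∈ DualFeas f g (u i) θ ε} := by
    simpa only [Set.pi, mem_univ, true_imp_iff] using convex_pi (s := univ) fun i _ => hC (u i)
  refine ⟨hC, hfeas, ?_⟩
  exact ((convexOn_sum_norm_sub_fst_sq y).smul (by positivity : (0 : ℝ) ≤ 1 / n)).subset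
    (subset_univ _) hfeas

/-- Convexity of (R-)DB-RISK-SAA for fixed `θ` (Propositions 4 and 6): under A1,
the set `C(u,θ,ε)` is convex, and the regularized duality-based problem — minimizing
`(1/n) Σ_i ‖y_i − x_i‖²` subject to `(x_i,λ_i) ∈ C(u_i,θ,ε)` — is a convex
optimization problem: its feasible set is convex and its objective is convex on it. -/
theorem statement2 {d m p q : ℕ} (n : ℕ)
    (f : Euc d → Euc m → Euc p → ℝ) (g : Euc d → Euc m → Euc p → Fin q → ℝ)
    (θ : Euc p) (ε : ℝ) (hε : 0 ≤ ε)
    -- A1: for each fixed (u, θ), continuity and convexity in x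
    (hf_cont : ∀ uu : Euc m, Continuous fun x => f x uu θ)
    (hf_conv : ∀ uu : Euc m, ConvexOn ℝ Set.univ fun x => f x uu θ)
    (hg_cont : ∀ (uu : Euc m) (j : Fin q), Continuous fun x => g x uu θ j)
    (hg_conv : ∀ (uu : Euc m) (j : Fin q), ConvexOn ℝ Set.univ fun x => g x uu θ j)
    -- data
    (u : Fin n → Euc m) (y : Fin n → Euc d) :
    (∀ uu : Euc m, Convex ℝ (DualFeas f g uu θ ε)) ∧
    Convex ℝ {X : Fin n → Euc d × (Fin q → ℝ) | ∀ i, X i ∈ DualFeas f g (u i) θ ε} ∧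
    ConvexOn ℝ {X : Fin n → Euc d × (Fin q → ℝ) | ∀ i, X i ∈ DualFeas f g (u i) θ ε}
      (fun X => (1 / n : ℝ) * ∑ i, ‖y i - (X i).1‖ ^ 2) :=
  statement2_general n f g θ ε hf_conv hg_conv u y
end
end

section
/- Suppose Assumptions A1, A2 and R1 hold, that f and g are jointly continuous in (x,u,θ), and that f(·,u,θ) is strictly convex on ℝ^d for each fixed (u,θ) ∈ 𝒰 × Θ. Fix data (u_i, y_i) ∈ ℝ^m × ℝ^d, i = 1,…,n, with each u_i ∈ 𝒰. Then for each (u,θ) ∈ 𝒰 × Θ the solution set S(u,θ) consists of a single point, and the function Q_n : Θ → ℝ defined by Q_n(θ) = inf{ (1/n) Σ_{i=1}^n ‖y_i − x_i‖² : x_i ∈ S(u_i,θ) for all i } is continuous on Θ. -/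
open Set Metric Filter MeasureTheory ProbabilityTheory

noncomputable section

/-- Feasible set `Φ(u,θ)` of FOP. -/
def Feas {d m p q : ℕ} (g : Euc d → Euc m → Euc p → Fin q → ℝ)
    (u : Euc m) (θ : Euc p) : Set (Euc d) :=
  {x | ∀ j, g x u θ j ≤ 0}

/-- Solution set `S(u,θ)` of FOP. -/
def Sol {d m p q : ℕ} (f : Euc d → Euc m → Euc p → ℝ)
    (g : Euc d → Euc m → Euc p → Fin q → ℝ) (u : Euc m) (θ : Euc p) : Set (Euc d) :=
  {x ∈ Feas g u θ | ∀ x' ∈ Feas g u θ, f x u θ ≤ f x' u θ}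

/-- The sample-average risk `Q_n(θ)` of RISK-SAA. -/
def Qn {d m p q : ℕ} (f : Euc d → Euc m → Euc p → ℝ)
    (g : Euc d → Euc m → Euc p → Fin q → ℝ) (n : ℕ)
    (u : Fin n → Euc m) (y : Fin n → Euc d) (θ : Euc p) : ℝ :=
  sInf ((fun x : Fin n → Euc d => (1 / n : ℝ) * ∑ i, ‖y i - x i‖ ^ 2) ''
    {x | ∀ i, x i ∈ Sol f g (u i) θ})

open Topology

/-!
A strictly convex continuous function has exactly one minimiser on a nonempty compact
convex set, so each `S(u,θ)` is a singleton `{x(u,θ)}`. For continuity of `θ ↦ x(u,θ)`, every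
cluster point of `x(u,θ')` as `θ' → θ` is feasible at `θ` by continuity of `g`; it is optimal
because the Slater point makes the strictly feasible points dense in `Φ(u,θ)`, and a strictly
feasible point stays feasible for all nearby `θ'`. The uniform bound `M` keeps the solutions in a
compact ball, so a unique cluster point is a limit. Then `Q_n(θ)` is an explicit continuous
expression in the `x(u_i,θ)`.
-/

section ConvexConstraints

variable {E ι : Type*} [AddCommGroup E] [Module ℝ E] {G : E → ι → ℝ}

theorem convex_setOf_forall_nonpos (hG : ∀ j, ConvexOn ℝ univ fun x => G x j) :
    Convex ℝ {x | ∀ j, G x j ≤ 0} := by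
  simpa only [ofPred_forall] using
    convex_iInter fun j => by simpa using (hG j).convex_le 0

theorem openSegment_subset_setOf_forall_neg (hG : ∀ j, ConvexOn ℝ univ fun x => G x j)
    {x xb : E} (hx : ∀ j, G x j ≤ 0) (hxb : ∀ j, G xb j < 0) :
    openSegment ℝ x xb ⊆ {z | ∀ j, G z j < 0} := by
  rintro _ ⟨a, b, ha, hb, hab, rfl⟩ j
  calc G (a • x + b • xb) j ≤ a * G x j + b * G xb j :=
        (hG j).2 trivial trivial ha.le hb.le hab
    _ < 0 := add_neg_of_nonpos_of_neg (mul_nonpos_of_nonneg_of_nonpos ha.le (hx j))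
      (mul_neg_of_pos_of_neg hb (hxb j))

theorem subset_closure_setOf_forall_neg [TopologicalSpace E] [ContinuousAdd E]
    [ContinuousSMul ℝ E] (hG : ∀ j, ConvexOn ℝ univ fun x => G x j) {xb : E}
    (hxb : ∀ j, G xb j < 0) :
    {x | ∀ j, G x j ≤ 0} ⊆ closure {x | ∀ j, G x j < 0} := fun x hx =>
  closure_mono (openSegment_subset_setOf_forall_neg hG hx hxb)
    (segment_subset_closure_openSegment (left_mem_segment ℝ x xb))

end ConvexConstraints

theorem exists_setOf_isMinOn_eq_singleton {E : Type*} [AddCommGroup E] [Module ℝ E]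
    [TopologicalSpace E] {K : Set E} {F : E → ℝ} (hK : IsCompact K) (hne : K.Nonempty)
    (hF : ContinuousOn F K) (hstrict : StrictConvexOn ℝ K F) :
    ∃ x, {x ∈ K | IsMinOn F K x} = {x} := by
  obtain ⟨x, hx, hmin⟩ := hK.exists_isMinOn hne hF
  exact ⟨x, eq_singleton_iff_unique_mem.2
    ⟨⟨hx, hmin⟩, fun y hy => hstrict.eq_of_isMinOn hy.2 hmin hy.1 hx⟩⟩

section Stability

variable {d m p q : ℕ} {f : Euc d → Euc m → Euc p → ℝ}
  {g : Euc d → Euc m → Euc p → Fin q → ℝ} {u : Euc m} {θ : Euc p}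

variable (hf_cont : Continuous fun t : Euc d × Euc m × Euc p => f t.1 t.2.1 t.2.2)
include hf_cont

theorem continuous_objective : Continuous fun x => f x u θ :=
  hf_cont.comp (continuous_id.prodMk continuous_const : Continuous fun x : Euc d => (x, u, θ))

variable (hg_conv : ∀ j, ConvexOn ℝ univ fun x => g x u θ j)
include hg_conv

theorem Sol_eq_singleton_of_strictConvexOn (hf_strict : StrictConvexOn ℝ univ fun x => f x u θ)
    (hcpt : IsCompact (Feas g u θ)) (hne : (Feas g u θ).Nonempty) :
    ∃ x, Sol f g u θ = {x} :=
  exists_setOf_isMinOn_eq_singleton hcpt hne (continuous_objective hf_cont).continuousOn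
    (hf_strict.subset (subset_univ _) (convex_setOf_forall_nonpos hg_conv))

variable (hg_cont : ∀ j, Continuous fun t : Euc d × Euc m × Euc p => g t.1 t.2.1 t.2.2 j)
  {xb : Euc d} (hxb : ∀ j, g xb u θ j < 0)
include hg_cont hxb

theorem mem_Sol_of_tendsto {ι : Type*} {l : Filter ι} [l.NeBot] {θk : ι → Euc p}
    {xk : ι → Euc d} {x : Euc d} (hθk : Tendsto θk l (𝓝 θ)) (hxk : Tendsto xk l (𝓝 x))
    (hsol : ∀ᶠ k in l, xk k ∈ Sol f g u (θk k)) :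
    x ∈ Sol f g u θ := by
  have hlim : ∀ {F : Euc d × Euc m × Euc p → ℝ}, Continuous F →
      ∀ {zk : ι → Euc d} {z : Euc d},
      Tendsto zk l (𝓝 z) → Tendsto (fun k => F (zk k, u, θk k)) l (𝓝 (F (z, u, θ))) :=
    fun hF _ _ hz => (hF.tendsto _).comp (hz.prodMk_nhds (tendsto_const_nhds.prodMk_nhds hθk))
  refine ⟨fun j => le_of_tendsto (hlim (hg_cont j) hxk) (hsol.mono fun k hk => hk.1 j), ?_⟩
  have hopt_strict : ∀ z ∈ {z | ∀ j, g z u θ j < 0}, f x u θ ≤ f z u θ := by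
    intro z hz
    have hfeas : ∀ᶠ k in l, z ∈ Feas g u (θk k) := eventually_all.2 fun j =>
      ((hlim (hg_cont j) tendsto_const_nhds).eventually (gt_mem_nhds (hz j))).mono
        fun _ h => h.le
    exact le_of_tendsto_of_tendsto (hlim hf_cont hxk) (hlim hf_cont tendsto_const_nhds)
      ((hsol.and hfeas).mono fun k hk => hk.1.2 z hk.2)
  have hclosed : IsClosed {z | f x u θ ≤ f z u θ} :=
    isClosed_le continuous_const (continuous_objective hf_cont)
  exact fun z hz =>
    closure_minimal hopt_strict hclosed (subset_closure_setOf_forall_neg hg_conv hxb hz)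

theorem continuousWithinAt_of_Sol_eq_singleton {Θ : Set (Euc p)} {s : Euc p → Euc d} {M : ℝ}
    (hθ : θ ∈ Θ) (hs : ∀ θ' ∈ Θ, Sol f g u θ' = {s θ'})
    (hM : ∀ θ' ∈ Θ, ‖s θ'‖ ≤ M) :
    ContinuousWithinAt s Θ θ := by
  refine (isCompact_closedBall (0 : Euc d) M).tendsto_nhds_of_unique_mapClusterPt
    (eventually_nhdsWithin_of_forall fun θ' hθ' => mem_closedBall_zero_iff.2 (hM θ' hθ'))
    fun x _ hx => ?_
  obtain ⟨U, hU, hsU⟩ := mapClusterPt_iff_ultrafilter.1 hx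
  have hmem : x ∈ Sol f g u θ :=
    mem_Sol_of_tendsto hf_cont hg_conv hg_cont hxb (hU.trans nhdsWithin_le_nhds) hsU
      (hU (eventually_nhdsWithin_of_forall fun θ' hθ' => (hs θ' hθ').ge rfl))
  rwa [hs θ hθ] at hmem

end Stability

theorem Qn_eq_of_Sol_eq_singleton {d m p q n : ℕ} {f : Euc d → Euc m → Euc p → ℝ}
    {g : Euc d → Euc m → Euc p → Fin q → ℝ} {u : Fin n → Euc m} {y : Fin n → Euc d}
    {θ : Euc p} {x : Fin n → Euc d} (hx : ∀ i, Sol f g (u i) θ = {x i}) :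
    Qn f g n u y θ = (1 / n : ℝ) * ∑ i, ‖y i - x i‖ ^ 2 := by
  have hsol : {z : Fin n → Euc d | ∀ i, z i ∈ Sol f g (u i) θ} = {x} := by
    ext z
    simp [hx, funext_iff]
  rw [Qn, hsol, image_singleton, csInf_singleton]

theorem statement3_general {d m p q : ℕ} (n : ℕ)
    (f : Euc d → Euc m → Euc p → ℝ) (g : Euc d → Euc m → Euc p → Fin q → ℝ)
    (𝒰 : Set (Euc m)) (Θ : Set (Euc p))
    -- joint continuity of f and g
    (hf_cont : Continuous fun t : Euc d × Euc m × Euc p => f t.1 t.2.1 t.2.2)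
    (hg_cont : ∀ j, Continuous fun t : Euc d × Euc m × Euc p => g t.1 t.2.1 t.2.2 j)
    -- A1: convexity in x for each fixed (u, θ)
    (hg_conv : ∀ (uu : Euc m) (θθ : Euc p) (j : Fin q),
      ConvexOn ℝ Set.univ fun x => g x uu θθ j)
    -- strict convexity of f(·,u,θ) on 𝒰 × Θ
    (hf_strict : ∀ uu ∈ 𝒰, ∀ θθ ∈ Θ, StrictConvexOn ℝ Set.univ fun x => f x uu θθ)
    -- R1: nonempty compact feasible sets with Slater points, uniformly bounded
    (hR1 : ∀ uu ∈ 𝒰, ∀ θθ ∈ Θ, IsCompact (Feas g uu θθ) ∧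
      ∃ xb ∈ Feas g uu θθ, ∀ j, g xb uu θθ j < 0)
    (hR1bd : ∃ M > 0, ∀ uu ∈ 𝒰, ∀ θθ ∈ Θ, ∀ x ∈ Feas g uu θθ, ‖x‖ ≤ M)
    -- data
    (u : Fin n → Euc m) (y : Fin n → Euc d) (hu : ∀ i, u i ∈ 𝒰) :
    (∀ uu ∈ 𝒰, ∀ θθ ∈ Θ, ∃! x : Euc d, x ∈ Sol f g uu θθ) ∧
    ContinuousOn (Qn f g n u y) Θ := by
  obtain ⟨M, -, hM⟩ := hR1bd
  have hSol : ∀ uu ∈ 𝒰, ∀ θ ∈ Θ, ∃ x, Sol f g uu θ = {x} := fun uu huu θ hθ =>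
    have ⟨hcpt, xb, hxb, _⟩ := hR1 uu huu θ hθ
    Sol_eq_singleton_of_strictConvexOn hf_cont (hg_conv uu θ) (hf_strict uu huu θ hθ) hcpt
      ⟨xb, hxb⟩
  refine ⟨fun uu huu θ hθ => ?_, ?_⟩
  · obtain ⟨x, hx⟩ := hSol uu huu θ hθ
    exact hx ▸ existsUnique_eq
  choose! s hs using fun i => hSol (u i) (hu i)
  have hs_cont : ∀ i, ContinuousOn (s i) Θ := fun i θ hθ =>
    have ⟨_, xb, _, hxb⟩ := hR1 (u i) (hu i) θ hθ
    continuousWithinAt_of_Sol_eq_singleton hf_cont (hg_conv (u i) θ) hg_cont hxb hθ (hs i)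
      fun θ' hθ' => hM _ (hu i) θ' hθ' _ ((hs i θ' hθ').ge rfl).1
  refine ContinuousOn.congr ?_ fun θ hθ => Qn_eq_of_Sol_eq_singleton fun i => hs i θ hθ
  exact continuousOn_const.mul
    (continuousOn_finsetSum _ fun i _ => (continuousOn_const.sub (hs_cont i)).norm.pow 2)

/-- Proposition 2 (strict convexity implies continuity of `Q_n`): under A1, A2, R1,
joint continuity of `f` and `g`, and strict convexity of `f(·,u,θ)` for `(u,θ) ∈ 𝒰 × Θ`,
the solution set `S(u,θ)` is a single point for each `(u,θ) ∈ 𝒰 × Θ` and the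
sample-average risk `Q_n` is continuous on `Θ`. -/
theorem statement3 {d m p q : ℕ} (n : ℕ)
    (f : Euc d → Euc m → Euc p → ℝ) (g : Euc d → Euc m → Euc p → Fin q → ℝ)
    (𝒰 : Set (Euc m)) (Θ : Set (Euc p))
    -- joint continuity of f and g
    (hf_cont : Continuous fun t : Euc d × Euc m × Euc p => f t.1 t.2.1 t.2.2)
    (hg_cont : ∀ j, Continuous fun t : Euc d × Euc m × Euc p => g t.1 t.2.1 t.2.2 j)
    -- A1: convexity in x for each fixed (u, θ)
    (hf_conv : ∀ (uu : Euc m) (θθ : Euc p), ConvexOn ℝ Set.univ fun x => f x uu θθ)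
    (hg_conv : ∀ (uu : Euc m) (θθ : Euc p) (j : Fin q),
      ConvexOn ℝ Set.univ fun x => g x uu θθ j)
    -- strict convexity of f(·,u,θ) on 𝒰 × Θ
    (hf_strict : ∀ uu ∈ 𝒰, ∀ θθ ∈ Θ, StrictConvexOn ℝ Set.univ fun x => f x uu θθ)
    -- A2
    (hΘ : Convex ℝ Θ)
    -- R1: nonempty compact feasible sets with Slater points, uniformly bounded
    (hR1 : ∀ uu ∈ 𝒰, ∀ θθ ∈ Θ, IsCompact (Feas g uu θθ) ∧
      ∃ xb ∈ Feas g uu θθ, ∀ j, g xb uu θθ j < 0)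
    (hR1bd : ∃ M > 0, ∀ uu ∈ 𝒰, ∀ θθ ∈ Θ, ∀ x ∈ Feas g uu θθ, ‖x‖ ≤ M)
    -- data
    (u : Fin n → Euc m) (y : Fin n → Euc d) (hu : ∀ i, u i ∈ 𝒰) :
    (∀ uu ∈ 𝒰, ∀ θθ ∈ Θ, ∃! x : Euc d, x ∈ Sol f g uu θθ) ∧
    ContinuousOn (Qn f g n u y) Θ :=
  statement3_general n f g 𝒰 Θ hf_cont hg_cont hg_conv hf_strict hR1 hR1bd u y hu
end
end

section
/- Suppose Assumptions A1, A2 and R1 hold and that f and g are jointly continuous in (x,u,θ). Fix data (u_i, y_i) ∈ ℝ^m × ℝ^d, i = 1,…,n, with each u_i ∈ 𝒰. Then the regularized sample-average risk (θ,ε) ↦ Q_n(θ; ε) is jointly continuous on Θ × (0,∞). -/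
open Set Metric Filter MeasureTheory ProbabilityTheory

noncomputable section

/-- The regularized sample-average risk `Q_n(θ; ε)` of R-DB-RISK-SAA: the infimum of
`(1/n) Σ_i ‖y_i − x_i‖²` over all `x` such that for each `i` there is `λ_i ≥ 0` with
`g(x_i,u_i,θ) ≤ ε` componentwise and `f(x_i,u_i,θ) − h(λ_i,u_i,θ) ≤ ε`. -/
def QnR {d m p q : ℕ} (f : Euc d → Euc m → Euc p → ℝ)
    (g : Euc d → Euc m → Euc p → Fin q → ℝ) (n : ℕ)
    (u : Fin n → Euc m) (y : Fin n → Euc d) (θ : Euc p) (ε : ℝ) : ℝ :=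
  sInf ((fun x : Fin n → Euc d => (1 / n : ℝ) * ∑ i, ‖y i - x i‖ ^ 2) ''
    {x | ∀ i, (∀ j, g (x i) (u i) θ j ≤ ε) ∧
      ∃ lam : Fin q → ℝ, (∀ j, 0 ≤ lam j) ∧
        ∀ x' : Euc d, f (x i) (u i) θ ≤ f x' (u i) θ + ∑ j, lam j * g x' (u i) θ j + ε})


/-!
By strong Lagrangian duality under Slater's condition, the `i`-th constraint in `Q_n(θ; ε)` says
that `x_i` is `ε`-feasible and `ε`-optimal, so `Q_n(θ; ε)` is the mean of the squared distances
from `y_i` to the compact convex sets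
`S_i(θ, ε) = {x | g(x, u_i, θ) ≤ ε, f(x, u_i, θ) ≤ v_i(θ) + ε}`, `v_i` the optimal value.
It suffices that these sets move continuously in Hausdorff distance. Shifting a point of
`S_i(θ, ε + a)` the fraction `a / (a + ε)` of the way towards a minimizer brings it into
`S_i(θ, ε)`, by convexity. The sets near `(θ, ε)` lie in a common ball (shift towards a Slater
point instead), on which `f` and `g` are uniformly continuous in `θ`; and `v_i` is continuous,
again by shifting towards a Slater point.
-/

open Function Topology

section Duality

variable {E ι : Type*}

theorem le_and_nonpos_of_forall_add_mul_lt {a b k : ℝ} (h : ∀ s > 0, a + s * k < b) :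
    a ≤ b ∧ k ≤ 0 := by
  constructor
  · have hlim : Tendsto (fun s : ℝ => a + s * k) (𝓝[>] 0) (𝓝 a) :=
      ((by fun_prop : Continuous fun s : ℝ => a + s * k).tendsto' 0 a (by simp)).mono_left
        nhdsWithin_le_nhds
    exact le_of_tendsto hlim (eventually_nhdsWithin_of_forall fun s hs => (h s hs).le)
  · by_contra! hk
    have := h ((|b - a| + 1) / k) (by positivity)
    rw [div_mul_cancel₀ _ hk.ne'] at this
    linarith [le_abs_self (b - a)]

theorem combo_lt_combo {a b X X' Y Y' : ℝ} (ha : 0 ≤ a) (hb : 0 ≤ b) (hab : a + b = 1)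
    (hX : X < X') (hY : Y < Y') : a * X + b * Y < a * X' + b * Y' := by
  rcases ha.eq_or_lt with rfl | ha
  · obtain rfl : b = 1 := by linarith
    linarith
  · linarith [mul_lt_mul_of_pos_left hX ha, mul_le_mul_of_nonneg_left hY.le hb]

theorem ContinuousLinearMap.apply_prod_eq_sum [Fintype ι] [DecidableEq ι]
    (ℓ : StrongDual ℝ ((ι → ℝ) × ℝ)) (z : ι → ℝ) (r : ℝ) :
    ℓ (z, r) = ∑ j, z j * ℓ (Pi.single j 1, 0) + r * ℓ (0, 1) := by
  have hzr : (z, r) =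
      ∑ j, z j • ((Pi.single j 1 : ι → ℝ), (0 : ℝ)) + r • ((0 : ι → ℝ), (1 : ℝ)) := by
    ext j <;> simp [Prod.fst_sum, Prod.snd_sum, Finset.sum_apply, Pi.single_apply]
  rw [hzr, map_add, map_sum]
  simp only [map_smul, smul_eq_mul]

/-- The set `𝒜` of Boyd–Vandenberghe, §5.3, with strict inequalities so that it is open. -/
def strictPerturbationSet (F : E → ℝ) (G : E → ι → ℝ) : Set ((ι → ℝ) × ℝ) :=
  {p | ∃ x, (∀ j, G x j < p.1 j) ∧ F x < p.2}

theorem isOpen_strictPerturbationSet [Finite ι] (F : E → ℝ) (G : E → ι → ℝ) :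
    IsOpen (strictPerturbationSet F G) := by
  have : strictPerturbationSet F G = ⋃ x, (univ.pi fun j => Ioi (G x j)) ×ˢ Ioi (F x) := by
    ext; simp [strictPerturbationSet]
  rw [this]
  exact isOpen_iUnion fun x => (isOpen_set_pi finite_univ fun j _ => isOpen_Ioi).prod isOpen_Ioi

theorem convex_strictPerturbationSet [AddCommGroup E] [Module ℝ E] {F : E → ℝ} {G : E → ι → ℝ}
    (hF : ConvexOn ℝ univ F) (hG : ∀ j, ConvexOn ℝ univ (G · j)) :
    Convex ℝ (strictPerturbationSet F G) := by
  rintro p ⟨x, hGx, hFx⟩ p' ⟨x', hGx', hFx'⟩ a b ha hb hab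
  refine ⟨a • x + b • x', fun j => ?_, ?_⟩
  · calc G (a • x + b • x') j ≤ a * G x j + b * G x' j := (hG j).2 trivial trivial ha hb hab
      _ < a * p.1 j + b * p'.1 j := combo_lt_combo ha hb hab (hGx j) (hGx' j)
      _ = (a • p + b • p').1 j := by simp
  · calc F (a • x + b • x') ≤ a * F x + b * F x' := hF.2 trivial trivial ha hb hab
      _ < a * p.2 + b * p'.2 := combo_lt_combo ha hb hab hFx hFx'
      _ = (a • p + b • p').2 := by simp

theorem exists_fritzJohn_multipliers [AddCommGroup E] [Module ℝ E] [Fintype ι] {F : E → ℝ}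
    {G : E → ι → ℝ} (hF : ConvexOn ℝ univ F) (hG : ∀ j, ConvexOn ℝ univ (G · j)) {v : ℝ}
    (hv : ∀ x, (∀ j, G x j ≤ 0) → v ≤ F x) :
    ∃ μ : ι → ℝ, ∃ c : ℝ, (∀ j, 0 ≤ μ j) ∧ 0 ≤ c ∧ (μ ≠ 0 ∨ c ≠ 0) ∧
      ∀ x, c * v ≤ c * F x + ∑ j, μ j * G x j := by
  classical
  set A := strictPerturbationSet F G
  have hvA : ((0 : ι → ℝ), v) ∉ A := fun ⟨x, hGx, hFx⟩ =>
    (hv x fun j => (hGx j).le).not_gt hFx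
  obtain ⟨ℓ, hℓ⟩ := geometric_hahn_banach_open_point
    (convex_strictPerturbationSet hF hG) (isOpen_strictPerturbationSet F G) hvA
  set μ : ι → ℝ := fun j => -ℓ (Pi.single j 1, 0)
  set c : ℝ := -ℓ (0, 1)
  have hℓμc : ∀ z r, ℓ (z, r) = -(∑ j, μ j * z j + c * r) := by
    intro z r
    rw [ℓ.apply_prod_eq_sum]
    simp only [μ, c, neg_mul, Finset.sum_neg_distrib]
    rw [Finset.sum_congr rfl fun j _ => mul_comm (z j) _]
    ring
  have hray : ∀ p w, (∀ s : ℝ, 0 < s → p + s • w ∈ A) → ℓ p ≤ ℓ (0, v) ∧ ℓ w ≤ 0 :=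
    fun p w hpw => le_and_nonpos_of_forall_add_mul_lt fun s hs => by
      simpa [map_add, map_smul] using hℓ _ (hpw s hs)
  set p₀ : (ι → ℝ) × ℝ := ((fun j => G 0 j + 1), F 0 + 1)
  have hp₀ : p₀ ∈ A := ⟨0, fun j => by simp [p₀], by simp [p₀]⟩
  have hdir : ∀ w : (ι → ℝ) × ℝ, 0 ≤ w → ℓ w ≤ 0 := by
    refine fun w hw => (hray p₀ w fun s hs => ⟨0, fun j => ?_, ?_⟩).2
    · have : 0 ≤ s * w.1 j := mul_nonneg hs.le (hw.1 j)
      simp only [p₀, Prod.fst_add, Prod.smul_fst, Pi.add_apply, Pi.smul_apply, smul_eq_mul]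
      linarith
    · have : 0 ≤ s * w.2 := mul_nonneg hs.le hw.2
      simp only [p₀, Prod.snd_add, Prod.smul_snd, smul_eq_mul]
      linarith
  refine ⟨μ, c, fun j => neg_nonneg.2 (hdir _ ⟨fun j' => ?_, le_rfl⟩),
    neg_nonneg.2 (hdir _ ⟨le_rfl, zero_le_one⟩), ?_, fun x => ?_⟩
  · simp only [Pi.single_apply]
    split_ifs <;> norm_num
  · by_contra! h
    have := hℓ p₀ hp₀
    simp [hℓμc, h.1, h.2] at this
  · have := (hray (G x, F x) ((fun _ => 1), 1) fun s hs =>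
      ⟨x, fun j => by simp [hs], by simp [hs]⟩).1
    rw [hℓμc, hℓμc] at this
    simp only [Pi.zero_apply, mul_zero, Finset.sum_const_zero, zero_add, neg_le_neg_iff] at this
    linarith

theorem exists_lagrange_multipliers [AddCommGroup E] [Module ℝ E] [Fintype ι] {F : E → ℝ}
    {G : E → ι → ℝ} (hF : ConvexOn ℝ univ F) (hG : ∀ j, ConvexOn ℝ univ (G · j)) {xb : E}
    (hxb : ∀ j, G xb j < 0) {v : ℝ} (hv : ∀ x, (∀ j, G x j ≤ 0) → v ≤ F x) :
    ∃ lam : ι → ℝ, (∀ j, 0 ≤ lam j) ∧ ∀ x, v ≤ F x + ∑ j, lam j * G x j := by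
  obtain ⟨μ, c, hμ, hc, hne, hFJ⟩ := exists_fritzJohn_multipliers hF hG hv
  have hc_pos : 0 < c := by
    refine hc.lt_of_ne' fun hc0 => hne.resolve_right (not_not.2 hc0) (funext fun j => ?_)
    have hterm : ∀ j ∈ Finset.univ, μ j * G xb j ≤ 0 :=
      fun j _ => mul_nonpos_of_nonneg_of_nonpos (hμ j) (hxb j).le
    have hsum : 0 ≤ ∑ j, μ j * G xb j := by simpa [hc0] using hFJ xb
    have := (Finset.sum_eq_zero_iff_of_nonpos hterm).1
      (le_antisymm (Finset.sum_nonpos hterm) hsum) j (Finset.mem_univ j)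
    exact (mul_eq_zero.1 this).resolve_right (hxb j).ne
  refine ⟨fun j => μ j / c, fun j => div_nonneg (hμ j) hc, fun x => ?_⟩
  have hsum : ∑ j, μ j / c * G x j = (∑ j, μ j * G x j) / c := by
    rw [Finset.sum_div]
    exact Finset.sum_congr rfl fun j _ => div_mul_eq_mul_div _ _ _
  rw [hsum, ← sub_le_iff_le_add', le_div_iff₀ hc_pos]
  linarith [hFJ x]

theorem exists_lagrange_le_iff [AddCommGroup E] [Module ℝ E] [Fintype ι] {F : E → ℝ}
    {G : E → ι → ℝ} (hF : ConvexOn ℝ univ F) (hG : ∀ j, ConvexOn ℝ univ (G · j)) {xb : E}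
    (hxb : ∀ j, G xb j < 0) {x₀ : E}
    (hx₀ : ∀ j, G x₀ j ≤ 0) (hmin : ∀ x, (∀ j, G x j ≤ 0) → F x₀ ≤ F x) (z : E) (ε : ℝ) :
    (∃ lam : ι → ℝ, (∀ j, 0 ≤ lam j) ∧ ∀ x, F z ≤ F x + ∑ j, lam j * G x j + ε) ↔
      F z - F x₀ ≤ ε := by
  constructor
  · rintro ⟨lam, hlam, h⟩
    have : ∑ j, lam j * G x₀ j ≤ 0 :=
      Finset.sum_nonpos fun j _ => mul_nonpos_of_nonneg_of_nonpos (hlam j) (hx₀ j)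
    linarith [h x₀]
  · intro h
    obtain ⟨lam, hlam, hdual⟩ := exists_lagrange_multipliers hF hG hxb hmin
    exact ⟨lam, hlam, fun x => by linarith [hdual x]⟩

end Duality

section ConvexCombination

variable {E ι : Type*} [NormedAddCommGroup E] [NormedSpace ℝ E]

theorem ConvexOn.apply_combo_le {f : E → ℝ} (hf : ConvexOn ℝ univ f) (x y : E) {t : ℝ}
    (ht₀ : 0 ≤ t) (ht₁ : t ≤ 1) : f ((1 - t) • x + t • y) ≤ (1 - t) * f x + t * f y :=
  hf.2 trivial trivial (by linarith) ht₀ (by ring)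

theorem apply_combo_le_of_sublevel {φ : E → ι → ℝ} (hφ : ∀ k, ConvexOn ℝ univ (φ · k))
    {x x₀ : E} {a c γ : ℝ} (hx₀ : ∀ k, φ x₀ k ≤ γ - c) (hx : ∀ k, φ x k ≤ γ + a) (hc : 0 < c)
    (ha : 0 ≤ a) (k : ι) :
    φ ((1 - a / (a + c)) • x + (a / (a + c)) • x₀) k ≤ γ := by
  have hac : 0 < a + c := by linarith
  have ht₁ : a / (a + c) ≤ 1 := div_le_one_of_le₀ (by linarith) hac.le
  have h₁ : 0 ≤ 1 - a / (a + c) := by linarith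
  calc φ ((1 - a / (a + c)) • x + (a / (a + c)) • x₀) k
      ≤ (1 - a / (a + c)) * φ x k + a / (a + c) * φ x₀ k :=
        (hφ k).apply_combo_le x x₀ (by positivity) ht₁
    _ ≤ (1 - a / (a + c)) * (γ + a) + a / (a + c) * (γ - c) := by gcongr <;> simp [hx, hx₀]
    _ = γ := by field_simp; ring

theorem exists_sublevel_dist_le {φ : E → ι → ℝ} (hφ : ∀ k, ConvexOn ℝ univ (φ · k))
    {x x₀ : E} {a c γ : ℝ} (hx₀ : ∀ k, φ x₀ k ≤ γ - c) (hx : ∀ k, φ x k ≤ γ + a) (hc : 0 < c)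
    (ha : 0 ≤ a) : ∃ x', (∀ k, φ x' k ≤ γ) ∧ dist x x' ≤ a / (a + c) * dist x x₀ := by
  refine ⟨_, apply_combo_le_of_sublevel hφ hx₀ hx hc ha, le_of_eq ?_⟩
  rw [dist_eq_norm, dist_eq_norm,
    show x - ((1 - a / (a + c)) • x + (a / (a + c)) • x₀) = (a / (a + c)) • (x - x₀) by module,
    norm_smul, Real.norm_of_nonneg (by positivity)]

theorem norm_le_of_slater {G : E → ι → ℝ} (hG : ∀ j, ConvexOn ℝ univ (G · j)) {M : ℝ}
    (hM : ∀ x, (∀ j, G x j ≤ 0) → ‖x‖ ≤ M) {xb : E} {ρ : ℝ} (hxb : ∀ j, G xb j ≤ -ρ)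
    (hρ : 0 < ρ) {e : ℝ} (he : 0 ≤ e) {x : E} (hx : ∀ j, G x j ≤ e) :
    ‖x‖ ≤ (e + ρ) * (M + ‖xb‖) / ρ := by
  obtain ⟨x', hx', hd⟩ := exists_sublevel_dist_le hG (γ := 0) (c := ρ) (a := e)
    (by simpa using hxb) (by simpa using hx) hρ he
  have hsplit : ‖x‖ ≤ M + e / (e + ρ) * (‖x‖ + ‖xb‖) :=
    calc ‖x‖ ≤ ‖x'‖ + dist x x' := by
          rw [dist_eq_norm]; linarith [norm_le_norm_add_norm_sub' x x', norm_sub_rev x x']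
      _ ≤ M + e / (e + ρ) * (‖x‖ + ‖xb‖) := by
          gcongr
          · exact hM x' hx'
          · exact hd.trans (by gcongr; exact dist_le_norm_add_norm x xb)
  have hcleared : ρ * ‖x‖ ≤ (e + ρ) * M + e * ‖xb‖ := by
    have h := mul_le_mul_of_nonneg_left hsplit (by positivity : 0 ≤ e + ρ)
    have he : (e + ρ) * (M + e / (e + ρ) * (‖x‖ + ‖xb‖)) = (e + ρ) * M + e * (‖x‖ + ‖xb‖) := by
      field_simp
    linarith
  rw [le_div_iff₀ hρ]
  nlinarith [mul_nonneg hρ.le (norm_nonneg xb)]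

theorem le_add_of_slater {F : E → ℝ} {G : E → ι → ℝ} (hF : ConvexOn ℝ univ F)
    (hG : ∀ j, ConvexOn ℝ univ (G · j)) {v : ℝ} (hv : ∀ z, (∀ j, G z j ≤ 0) → v ≤ F z)
    {xb x : E} {ρ δ D : ℝ} (hxb : ∀ j, G xb j ≤ -ρ) (hρ : 0 < ρ) (hδ : 0 ≤ δ)
    (hx : ∀ j, G x j ≤ δ) (hD : |F xb - F x| ≤ D) : v ≤ F x + δ / ρ * D := by
  set t := δ / (δ + ρ)
  have ht₁ : t ≤ 1 := div_le_one_of_le₀ (by linarith) (by positivity)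
  have htρ : t ≤ δ / ρ := div_le_div_of_nonneg_left hδ hρ (by linarith)
  calc v ≤ F ((1 - t) • x + t • xb) :=
        hv _ (apply_combo_le_of_sublevel hG (γ := 0) (by simpa using hxb) (by simpa using hx) hρ hδ)
    _ ≤ (1 - t) * F x + t * F xb := hF.apply_combo_le x xb (by positivity) ht₁
    _ = F x + t * (F xb - F x) := by ring
    _ ≤ F x + δ / ρ * D := by
        have := (mul_le_mul_of_nonneg_left (le_abs_self _) (by positivity)).trans
          (mul_le_mul htρ hD (abs_nonneg (F xb - F x)) (by positivity))
        linarith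

end ConvexCombination

section Parametric

variable {E P ι : Type*} [TopologicalSpace P]

theorem IsCompact.eventually_forall_dist_lt {X Y : Type*} [TopologicalSpace X]
    [PseudoMetricSpace Y] {Φ : X → P → Y} (hΦ : Continuous (uncurry Φ)) {K : Set X}
    (hK : IsCompact K) (θ₀ : P) {η : ℝ} (hη : 0 < η) :
    ∀ᶠ θ in 𝓝 θ₀, ∀ x ∈ K, dist (Φ x θ) (Φ x θ₀) < η := by
  obtain ⟨V, hV, hVK⟩ := hK.mem_uniformity_of_prod (f := fun θ x => Φ x θ) (s := univ)
    (hΦ.comp continuous_swap).continuousOn (mem_univ θ₀) (dist_mem_uniformity hη)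
  rw [nhdsWithin_univ] at hV
  exact Filter.mem_of_superset hV fun θ hθ x hx => hVK θ hθ x hx

theorem exists_pos_eventually_le_neg [Finite ι] {h : P → ι → ℝ} {θ₀ : P}
    (hc : ContinuousAt h θ₀) (hneg : ∀ j, h θ₀ j < 0) :
    ∃ ρ > 0, ∀ᶠ θ in 𝓝 θ₀, ∀ j, h θ j ≤ -ρ := by
  have hlim : Tendsto (fun ρ : ℝ => -(2 * ρ)) (𝓝[>] 0) (𝓝 0) :=
    ((by fun_prop : Continuous fun ρ : ℝ => -(2 * ρ)).tendsto' 0 0 (by simp)).mono_left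
      nhdsWithin_le_nhds
  obtain ⟨ρ, hρ₀, hρ⟩ := ((eventually_all.2 fun j => hlim.eventually (lt_mem_nhds (hneg j))).and
    self_mem_nhdsWithin).exists
  refine ⟨ρ, mem_Ioi.1 hρ, eventually_all.2 fun j => ?_⟩
  filter_upwards [(continuousAt_pi.1 hc j).eventually
    (gt_mem_nhds (lt_add_of_pos_right (h θ₀ j) hρ))] with θ hθ
  linarith [hρ₀ j]

theorem exists_eventually_norm_le [NormedAddCommGroup E] [NormedSpace ℝ E] [Finite ι]
    {G : E → P → ι → ℝ} (hG : ∀ θ j, ConvexOn ℝ univ (G · θ j)) {Θ : Set P} {M : ℝ}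
    (hM : ∀ θ ∈ Θ, ∀ x, (∀ j, G x θ j ≤ 0) → ‖x‖ ≤ M) {θ₀ : P} {xb : E}
    (hc : ContinuousAt (G xb) θ₀) (hxb : ∀ j, G xb θ₀ j < 0) {e : ℝ} (he : 0 ≤ e) :
    ∃ B, ∀ᶠ θ in 𝓝[Θ] θ₀, ∀ x, (∀ j, G x θ j ≤ e) → ‖x‖ ≤ B := by
  obtain ⟨ρ, hρ, hslater⟩ := exists_pos_eventually_le_neg hc hxb
  refine ⟨(e + ρ) * (M + ‖xb‖) / ρ, ?_⟩
  filter_upwards [self_mem_nhdsWithin, nhdsWithin_le_nhds hslater] with θ hθ hθxb x hx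
  exact norm_le_of_slater (hG θ) (hM θ hθ) hθxb hρ he hx

theorem continuousWithinAt_optimalValue [NormedAddCommGroup E] [NormedSpace ℝ E] [ProperSpace E]
    [Fintype ι] {F : E → P → ℝ} {G : E → P → ι → ℝ} (hFc : Continuous (uncurry F))
    (hGc : Continuous (uncurry G)) (hF : ∀ θ, ConvexOn ℝ univ (F · θ))
    (hG : ∀ θ j, ConvexOn ℝ univ (G · θ j)) {Θ : Set P} {M : ℝ}
    (hM : ∀ θ ∈ Θ, ∀ x, (∀ j, G x θ j ≤ 0) → ‖x‖ ≤ M) {xs : P → E}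
    (hxs : ∀ θ ∈ Θ, ∀ j, G (xs θ) θ j ≤ 0)
    (hmin : ∀ θ ∈ Θ, ∀ x, (∀ j, G x θ j ≤ 0) → F (xs θ) θ ≤ F x θ) {θ₀ : P} (hθ₀ : θ₀ ∈ Θ)
    {xb : E} (hxb : ∀ j, G xb θ₀ j < 0) :
    ContinuousWithinAt (fun θ => F (xs θ) θ) Θ θ₀ := by
  obtain ⟨ρ, hρ, hslater⟩ :=
    exists_pos_eventually_le_neg (hGc.comp (Continuous.prodMk_right xb)).continuousAt hxb
  set K := insert xb (closedBall (0 : E) M)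
  have hK : IsCompact K := (isCompact_closedBall 0 M).insert xb
  have hxsK : ∀ θ ∈ Θ, xs θ ∈ K := fun θ hθ =>
    mem_insert_of_mem _ (mem_closedBall_zero_iff.2 (hM θ hθ _ (hxs θ hθ)))
  obtain ⟨C, hC⟩ := hK.exists_bound_of_continuousOn
    (hFc.comp (Continuous.prodMk_left θ₀)).continuousOn
  rw [ContinuousWithinAt, Metric.tendsto_nhds]
  intro η hη
  obtain ⟨δ, hδη, hδ⟩ : ∃ δ, δ + δ / ρ * (2 * C + 2 * δ) < η ∧ 0 < δ := by
    have hlim : Tendsto (fun δ => δ + δ / ρ * (2 * C + 2 * δ)) (𝓝[>] 0) (𝓝 0) :=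
      ((by fun_prop : Continuous fun δ => δ + δ / ρ * (2 * C + 2 * δ)).tendsto' 0 0
        (by simp)).mono_left nhdsWithin_le_nhds
    exact ((hlim.eventually (gt_mem_nhds hη)).and self_mem_nhdsWithin).exists
  have hFK : ∀ x ∈ K, |F x θ₀| ≤ C := fun x hx => by simpa using hC x hx
  filter_upwards [self_mem_nhdsWithin, nhdsWithin_le_nhds hslater,
    nhdsWithin_le_nhds (hK.eventually_forall_dist_lt hFc θ₀ hδ),
    nhdsWithin_le_nhds ((isCompact_closedBall (0 : E) M).eventually_forall_dist_lt hGc θ₀ hδ)]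
    with θ hθ hθxb hFθ hGθ
  have hFθ' : ∀ x ∈ K, |F x θ - F x θ₀| < δ := fun x hx => by simpa [Real.dist_eq] using hFθ x hx
  have hGθ' : ∀ θ' ∈ Θ, ∀ j, |G (xs θ') θ j - G (xs θ') θ₀ j| < δ := fun θ' hθ' j =>
    (dist_le_pi_dist _ _ j).trans_lt
      (hGθ _ (mem_closedBall_zero_iff.2 (hM θ' hθ' _ (hxs θ' hθ'))))
  have hFbound : ∀ x ∈ K, |F x θ| ≤ C + δ ∧ |F x θ₀| ≤ C + δ := fun x hx =>
    ⟨by linarith [abs_sub_abs_le_abs_sub (F x θ) (F x θ₀), hFθ' x hx, hFK x hx],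
      by linarith [hFK x hx]⟩
  have hD : ∀ x ∈ K, |F xb θ - F x θ| ≤ 2 * C + 2 * δ ∧ |F xb θ₀ - F x θ₀| ≤ 2 * C + 2 * δ :=
    fun x hx => have hxb := hFbound xb (mem_insert _ _); have hx := hFbound x hx
      ⟨(abs_sub _ _).trans (by linarith), (abs_sub _ _).trans (by linarith)⟩
  have hup : F (xs θ) θ ≤ F (xs θ₀) θ + δ / ρ * (2 * C + 2 * δ) :=
    le_add_of_slater (hF θ) (hG θ) (hmin θ hθ) hθxb hρ hδ.le
      (fun j => by linarith [(abs_lt.1 (hGθ' θ₀ hθ₀ j)).2, hxs θ₀ hθ₀ j]) (hD _ (hxsK θ₀ hθ₀)).1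
  have hlow : F (xs θ₀) θ₀ ≤ F (xs θ) θ₀ + δ / ρ * (2 * C + 2 * δ) :=
    le_add_of_slater (hF θ₀) (hG θ₀) (hmin θ₀ hθ₀) hslater.self_of_nhds hρ hδ.le
      (fun j => by linarith [(abs_lt.1 (hGθ' θ hθ j)).1, hxs θ hθ j]) (hD _ (hxsK θ hθ)).2
  rw [Real.dist_eq, abs_sub_lt_iff]
  constructor
  · linarith [(abs_lt.1 (hFθ' _ (hxsK θ₀ hθ₀))).2]
  · linarith [(abs_lt.1 (hFθ' _ (hxsK θ hθ))).1]

end Parametric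

section Sublevel

variable {E P ι : Type*}

def sublevelSet (φ : E → P → ι → ℝ) (θ : P) (ε : ℝ) : Set E :=
  {x | ∀ k, φ x θ k ≤ ε}

theorem tendsto_infDist_of_eventually_close {α X : Type*} [PseudoMetricSpace X] {l : Filter α}
    {s : α → Set X} {s₀ : Set X}
    (h : ∀ η > 0, ∀ᶠ a in l,
      (∀ x ∈ s a, ∃ x' ∈ s₀, dist x x' ≤ η) ∧ ∀ x ∈ s₀, ∃ x' ∈ s a, dist x x' ≤ η) (y : X) :
    Tendsto (fun a => infDist y (s a)) l (𝓝 (infDist y s₀)) := by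
  refine Metric.tendsto_nhds.2 fun η hη => (h (η / 2) (half_pos hη)).mono fun a ⟨h₁, h₂⟩ => ?_
  have hedist : ∀ {t t' : Set X}, (∀ x ∈ t, ∃ x' ∈ t', dist x x' ≤ η / 2) →
      ∀ x ∈ t, ∃ x' ∈ t', edist x x' ≤ ENNReal.ofReal (η / 2) := fun H x hx =>
    let ⟨x', hx', hd⟩ := H x hx; ⟨x', hx', (edist_le_ofReal (by positivity)).2 hd⟩
  have hfin : hausdorffEDist (s a) s₀ ≠ ⊤ := ne_top_of_le_ne_top ENNReal.ofReal_ne_top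
    (hausdorffEDist_le_of_mem_edist (hedist h₁) (hedist h₂))
  have hH : hausdorffDist (s a) s₀ ≤ η / 2 := hausdorffDist_le_of_mem_dist (by positivity) h₁ h₂
  have e₁ := infDist_le_infDist_add_hausdorffDist (x := y) hfin
  have e₂ := infDist_le_infDist_add_hausdorffDist (x := y)
    (by rwa [hausdorffEDist_comm] : hausdorffEDist s₀ (s a) ≠ ⊤)
  rw [hausdorffDist_comm] at e₂
  rw [Real.dist_eq, abs_sub_lt_iff]
  constructor <;> linarith

theorem eventually_sublevelSet_close [NormedAddCommGroup E] [NormedSpace ℝ E] [TopologicalSpace P]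
    {φ : E → P → ι → ℝ} {Θ : Set P} {θ₀ : P} {ε₀ B : ℝ} (hθ₀ : θ₀ ∈ Θ) (hε₀ : 0 < ε₀)
    (hconv : ∀ θ ∈ Θ, ∀ k, ConvexOn ℝ univ (φ · θ k))
    (hanchor : ∀ θ ∈ Θ, ∃ x₀, ∀ k, φ x₀ θ k ≤ 0)
    (hbdd : ∀ᶠ θ in 𝓝[Θ] θ₀, ∀ x ∈ sublevelSet φ θ (ε₀ + 1), ‖x‖ ≤ B)
    (hclose : ∀ a > 0, ∀ᶠ θ in 𝓝[Θ] θ₀, ∀ x, ‖x‖ ≤ B → ∀ k, |φ x θ k - φ x θ₀ k| < a)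
    {η : ℝ} (hη : 0 < η) :
    ∀ᶠ t in 𝓝[Θ] θ₀ ×ˢ 𝓝 ε₀,
      (∀ x ∈ sublevelSet φ t.1 t.2, ∃ x' ∈ sublevelSet φ θ₀ ε₀, dist x x' ≤ η) ∧
      ∀ x ∈ sublevelSet φ θ₀ ε₀, ∃ x' ∈ sublevelSet φ t.1 t.2, dist x x' ≤ η := by
  set a := η * ε₀ / (4 * (|B| + 1))
  have ha : 0 < a := by positivity
  have hpull : ∀ θ ∈ Θ, (∀ x ∈ sublevelSet φ θ (ε₀ + 1), ‖x‖ ≤ B) → ∀ ε, ε₀ / 2 ≤ ε →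
      ∀ x, ‖x‖ ≤ B → (∀ k, φ x θ k ≤ ε + a) → ∃ x' ∈ sublevelSet φ θ ε, dist x x' ≤ η := by
    intro θ hθ hB ε hε x hx hxa
    obtain ⟨x₀, hx₀⟩ := hanchor θ hθ
    have hx₀B : ‖x₀‖ ≤ B := hB x₀ fun k => (hx₀ k).trans (by linarith)
    obtain ⟨x', hx', hd⟩ := exists_sublevel_dist_le (hconv θ hθ) (c := ε)
      (by simpa using hx₀) hxa (by linarith) ha.le
    refine ⟨x', hx', hd.trans ?_⟩
    have ht : a / (a + ε) ≤ 2 * a / ε₀ := by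
      rw [div_le_div_iff₀ (by linarith) hε₀]; nlinarith
    have hdist : dist x x₀ ≤ 2 * (|B| + 1) := by
      linarith [dist_le_norm_add_norm x x₀, le_abs_self B]
    calc a / (a + ε) * dist x x₀ ≤ 2 * a / ε₀ * (2 * (|B| + 1)) :=
          mul_le_mul ht hdist dist_nonneg (by positivity)
      _ = η := by simp only [a]; field_simp; ring
  have hB₀ := hbdd.self_of_nhdsWithin hθ₀
  have hε : Icc (ε₀ / 2) (ε₀ + 1) ∩ Icc (ε₀ - a / 2) (ε₀ + a / 2) ∈ 𝓝 ε₀ :=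
    inter_mem (Icc_mem_nhds (by linarith) (by linarith)) (Icc_mem_nhds (by linarith) (by linarith))
  filter_upwards
    [(eventually_mem_nhdsWithin.and (hbdd.and (hclose (a / 2) (half_pos ha)))).prod_mk hε]
    with ⟨θ, ε⟩ ⟨⟨hθ, hBθ, hcl⟩, ⟨hε₁, hε₂⟩, hε₃, hε₄⟩
  constructor
  · intro x hx
    have hxB : ‖x‖ ≤ B := hBθ x fun k => (hx k).trans hε₂
    exact hpull θ₀ hθ₀ hB₀ ε₀ (by linarith) x hxB fun k => by
      linarith [(abs_lt.1 (hcl x hxB k)).1, hx k]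
  · intro x hx
    have hxB : ‖x‖ ≤ B := hB₀ x fun k => (hx k).trans (by linarith)
    exact hpull θ hθ hBθ ε hε₁ x hxB fun k => by
      linarith [(abs_lt.1 (hcl x hxB k)).2, hx k]

end Sublevel

section GapFamily

variable {E P ι : Type*}

/-- With `xs θ` a minimizer of `F · θ` under the constraints `G · θ`, the index `none` gives the
optimality gap. -/
def gapFamily (F : E → P → ℝ) (G : E → P → ι → ℝ) (xs : P → E) (x : E) (θ : P) : Option ι → ℝ
  | none => F x θ - F (xs θ) θ
  | some j => G x θ j

variable {F : E → P → ℝ} {G : E → P → ι → ℝ} {xs : P → E}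

theorem mem_sublevelSet_gapFamily_iff {x : E} {θ : P} {ε : ℝ} :
    x ∈ sublevelSet (gapFamily F G xs) θ ε ↔
      (∀ j, G x θ j ≤ ε) ∧ F x θ - F (xs θ) θ ≤ ε := by
  simp [sublevelSet, gapFamily, Option.forall, and_comm]

theorem mem_sublevelSet_gapFamily_self {θ : P} (hxs : ∀ j, G (xs θ) θ j ≤ 0) {ε : ℝ}
    (hε : 0 ≤ ε) : xs θ ∈ sublevelSet (gapFamily F G xs) θ ε :=
  mem_sublevelSet_gapFamily_iff.2 ⟨fun j => (hxs j).trans hε, by simpa using hε⟩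

variable [NormedAddCommGroup E] [NormedSpace ℝ E] [ProperSpace E] [TopologicalSpace P] [Fintype ι]

theorem isCompact_sublevelSet_gapFamily (hFc : Continuous (uncurry F))
    (hGc : Continuous (uncurry G)) (hG : ∀ θ j, ConvexOn ℝ univ (G · θ j)) {Θ : Set P} {M : ℝ}
    (hM : ∀ θ ∈ Θ, ∀ x, (∀ j, G x θ j ≤ 0) → ‖x‖ ≤ M) {θ : P} (hθ : θ ∈ Θ) {xb : E}
    (hxb : ∀ j, G xb θ j < 0) {ε : ℝ} (hε : 0 ≤ ε) :
    IsCompact (sublevelSet (gapFamily F G xs) θ ε) := by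
  obtain ⟨B, hB⟩ := exists_eventually_norm_le hG hM
    (hGc.comp (Continuous.prodMk_right xb)).continuousAt hxb hε
  refine isCompact_of_isClosed_isBounded ?_ (isBounded_closedBall.subset fun x hx =>
    mem_closedBall_zero_iff.2 (hB.self_of_nhdsWithin hθ x (mem_sublevelSet_gapFamily_iff.1 hx).1))
  simp only [sublevelSet, ofPred_forall]
  refine isClosed_iInter fun k => isClosed_le ?_ continuous_const
  cases k with
  | none => exact (hFc.comp (Continuous.prodMk_left θ)).sub continuous_const
  | some j => exact (continuous_apply j).comp (hGc.comp (Continuous.prodMk_left θ))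

theorem continuousOn_infDist_sublevelSet_gapFamily (hFc : Continuous (uncurry F))
    (hGc : Continuous (uncurry G)) (hF : ∀ θ, ConvexOn ℝ univ (F · θ))
    (hG : ∀ θ j, ConvexOn ℝ univ (G · θ j)) {Θ : Set P} {M : ℝ}
    (hM : ∀ θ ∈ Θ, ∀ x, (∀ j, G x θ j ≤ 0) → ‖x‖ ≤ M) (hxs : ∀ θ ∈ Θ, ∀ j, G (xs θ) θ j ≤ 0)
    (hmin : ∀ θ ∈ Θ, ∀ x, (∀ j, G x θ j ≤ 0) → F (xs θ) θ ≤ F x θ)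
    (hslater : ∀ θ ∈ Θ, ∃ xb, ∀ j, G xb θ j < 0) (y : E) :
    ContinuousOn (fun t : P × ℝ => infDist y (sublevelSet (gapFamily F G xs) t.1 t.2))
      (Θ ×ˢ Ioi 0) := by
  rintro ⟨θ₀, ε₀⟩ ⟨hθ₀, hε₀ : 0 < ε₀⟩
  obtain ⟨xb, hxb⟩ := hslater θ₀ hθ₀
  obtain ⟨B, hB⟩ := exists_eventually_norm_le hG hM
    (hGc.comp (Continuous.prodMk_right xb)).continuousAt hxb (e := ε₀ + 1) (by linarith)
  have hv := Metric.tendsto_nhds.1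
    (continuousWithinAt_optimalValue hFc hGc hF hG hM hxs hmin hθ₀ hxb)
  have hclose : ∀ a > 0, ∀ᶠ θ in 𝓝[Θ] θ₀, ∀ x, ‖x‖ ≤ B →
      ∀ k, |gapFamily F G xs x θ k - gapFamily F G xs x θ₀ k| < a := by
    intro a ha
    have hK := isCompact_closedBall (0 : E) B
    filter_upwards [nhdsWithin_le_nhds (hK.eventually_forall_dist_lt hFc θ₀ (half_pos ha)),
      nhdsWithin_le_nhds (hK.eventually_forall_dist_lt hGc θ₀ ha), hv (a / 2) (half_pos ha)]
      with θ hFθ hGθ hvθ x hx k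
    have hxB : x ∈ closedBall (0 : E) B := mem_closedBall_zero_iff.2 hx
    cases k with
    | none =>
      have hFx := hFθ x hxB
      rw [Real.dist_eq] at hFx hvθ
      calc |F x θ - F (xs θ) θ - (F x θ₀ - F (xs θ₀) θ₀)|
          ≤ |F x θ - F x θ₀| + |F (xs θ) θ - F (xs θ₀) θ₀| := by
            rw [show F x θ - F (xs θ) θ - (F x θ₀ - F (xs θ₀) θ₀)
              = (F x θ - F x θ₀) - (F (xs θ) θ - F (xs θ₀) θ₀) by ring]
            exact abs_sub _ _
        _ < a := by linarith
    | some j => exact (dist_le_pi_dist _ _ j).trans_lt (hGθ x hxB)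
  have hconv : ∀ θ ∈ Θ, ∀ k, ConvexOn ℝ univ (gapFamily F G xs · θ k) := fun θ _ k => by
    cases k with
    | none => exact (hF θ).sub (concaveOn_const _ convex_univ)
    | some j => exact hG θ j
  rw [ContinuousWithinAt, nhdsWithin_prod_eq, nhdsWithin_eq_nhds.2 (Ioi_mem_nhds hε₀)]
  exact tendsto_infDist_of_eventually_close (fun η hη => eventually_sublevelSet_close hθ₀ hε₀
    hconv (fun θ hθ => ⟨xs θ, mem_sublevelSet_gapFamily_self (hxs θ hθ) le_rfl⟩)
    (hB.mono fun θ hθ x hx => hθ x (mem_sublevelSet_gapFamily_iff.1 hx).1) hclose hη) y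

end GapFamily

theorem sInf_average_sq_norm_sub_eq {E : Type*} [NormedAddCommGroup E] {n : ℕ}
    (y : Fin n → E) {s : Fin n → Set E} (hs : ∀ i, IsCompact (s i)) (hne : ∀ i, (s i).Nonempty) :
    sInf ((fun x : Fin n → E => (1 / n : ℝ) * ∑ i, ‖y i - x i‖ ^ 2) '' {x | ∀ i, x i ∈ s i}) =
      (1 / n : ℝ) * ∑ i, infDist (y i) (s i) ^ 2 := by
  choose x hx hxd using fun i => (hs i).exists_infDist_eq_dist (hne i) (y i)
  refine IsLeast.csInf_eq ⟨⟨x, hx, by simp [hxd, dist_eq_norm]⟩, ?_⟩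
  rintro _ ⟨z, hz, rfl⟩
  dsimp only
  gcongr with i
  · exact infDist_nonneg
  · rw [← dist_eq_norm]
    exact infDist_le_dist_of_mem (hz i)

theorem statement4_general {d m p q : ℕ} (n : ℕ)
    (f : Euc d → Euc m → Euc p → ℝ) (g : Euc d → Euc m → Euc p → Fin q → ℝ)
    (𝒰 : Set (Euc m)) (Θ : Set (Euc p))
    -- joint continuity of f and g
    (hf_cont : Continuous fun t : Euc d × Euc m × Euc p => f t.1 t.2.1 t.2.2)
    (hg_cont : ∀ j, Continuous fun t : Euc d × Euc m × Euc p => g t.1 t.2.1 t.2.2 j)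
    -- A1: convexity in x for each fixed (u, θ)
    (hf_conv : ∀ (uu : Euc m) (θθ : Euc p), ConvexOn ℝ Set.univ fun x => f x uu θθ)
    (hg_conv : ∀ (uu : Euc m) (θθ : Euc p) (j : Fin q),
      ConvexOn ℝ Set.univ fun x => g x uu θθ j)
    -- R1: nonempty compact feasible sets with Slater points, uniformly bounded
    (hR1 : ∀ uu ∈ 𝒰, ∀ θθ ∈ Θ, IsCompact (Feas g uu θθ) ∧
      ∃ xb ∈ Feas g uu θθ, ∀ j, g xb uu θθ j < 0)
    (hR1bd : ∃ M > 0, ∀ uu ∈ 𝒰, ∀ θθ ∈ Θ, ∀ x ∈ Feas g uu θθ, ‖x‖ ≤ M)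
    -- data
    (u : Fin n → Euc m) (y : Fin n → Euc d) (hu : ∀ i, u i ∈ 𝒰) :
    ContinuousOn (fun t : Euc p × ℝ => QnR f g n u y t.1 t.2) (Θ ×ˢ Set.Ioi (0 : ℝ)) := by
  obtain ⟨M, -, hM⟩ := hR1bd
  set F : Fin n → Euc d → Euc p → ℝ := fun i x θ => f x (u i) θ
  set G : Fin n → Euc d → Euc p → Fin q → ℝ := fun i x θ => g x (u i) θ
  have hFc : ∀ i, Continuous (uncurry (F i)) := fun i =>
    hf_cont.comp (by fun_prop : Continuous fun z : Euc d × Euc p => (z.1, u i, z.2))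
  have hGc : ∀ i, Continuous (uncurry (G i)) := fun i => continuous_pi fun j =>
    (hg_cont j).comp (by fun_prop : Continuous fun z : Euc d × Euc p => (z.1, u i, z.2))
  have hMi : ∀ i, ∀ θ ∈ Θ, ∀ x, (∀ j, G i x θ j ≤ 0) → ‖x‖ ≤ M := fun i => hM (u i) (hu i)
  have hslater : ∀ i, ∀ θ ∈ Θ, ∃ xb, ∀ j, G i xb θ j < 0 := fun i θ hθ =>
    let ⟨_, xb, _, hxb⟩ := hR1 (u i) (hu i) θ hθ; ⟨xb, hxb⟩
  have hminimizer : ∀ i, ∀ θ ∈ Θ, ∃ x, (∀ j, G i x θ j ≤ 0) ∧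
      ∀ z, (∀ j, G i z θ j ≤ 0) → F i x θ ≤ F i z θ := fun i θ hθ =>
    let ⟨hK, xb, hxb, _⟩ := hR1 (u i) (hu i) θ hθ
    let ⟨x, hx, hmin⟩ := hK.exists_isMinOn ⟨xb, hxb⟩
      ((hFc i).comp (Continuous.prodMk_left θ)).continuousOn
    ⟨x, hx, fun _ hz => hmin hz⟩
  choose! xs hxs hmin using hminimizer
  have hQ : ∀ t ∈ Θ ×ˢ Ioi 0, QnR f g n u y t.1 t.2 = (1 / n : ℝ) *
      ∑ i, infDist (y i) (sublevelSet (gapFamily (F i) (G i) (xs i)) t.1 t.2) ^ 2 := by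
    rintro ⟨θ, ε⟩ ⟨hθ, hε : 0 < ε⟩
    dsimp only
    rw [QnR, ← sInf_average_sq_norm_sub_eq y
      (fun i => isCompact_sublevelSet_gapFamily (hFc i) (hGc i) (fun θ => hg_conv (u i) θ)
        (hMi i) hθ (hslater i θ hθ).choose_spec hε.le)
      (fun i => ⟨_, mem_sublevelSet_gapFamily_self (F := F i) (G := G i) (hxs i θ hθ) hε.le⟩)]
    congr 3
    ext x
    refine forall_congr' fun i => (and_congr_right fun _ => ?_).trans
      (mem_sublevelSet_gapFamily_iff (F := F i) (G := G i) (xs := xs i)).symm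
    exact exists_lagrange_le_iff (hf_conv (u i) θ) (hg_conv (u i) θ)
      (hslater i θ hθ).choose_spec (hxs i θ hθ) (hmin i θ hθ) (x i) ε
  refine ContinuousOn.congr ?_ hQ
  exact continuousOn_const.mul (continuousOn_finsetSum _ fun i _ =>
    (continuousOn_infDist_sublevelSet_gapFamily (hFc i) (hGc i) (fun θ => hf_conv (u i) θ)
      (fun θ => hg_conv (u i) θ) (hMi i) (hxs i) (hmin i) (hslater i) (y i)).pow 2)

/-- Proposition 7: under A1, A2, R1 and joint continuity of `f` and `g`, the
regularized sample-average risk `(θ,ε) ↦ Q_n(θ;ε)` is jointly continuous on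
`Θ × (0,∞)`. -/
theorem statement4 {d m p q : ℕ} (n : ℕ)
    (f : Euc d → Euc m → Euc p → ℝ) (g : Euc d → Euc m → Euc p → Fin q → ℝ)
    (𝒰 : Set (Euc m)) (Θ : Set (Euc p))
    -- joint continuity of f and g
    (hf_cont : Continuous fun t : Euc d × Euc m × Euc p => f t.1 t.2.1 t.2.2)
    (hg_cont : ∀ j, Continuous fun t : Euc d × Euc m × Euc p => g t.1 t.2.1 t.2.2 j)
    -- A1: convexity in x for each fixed (u, θ)
    (hf_conv : ∀ (uu : Euc m) (θθ : Euc p), ConvexOn ℝ Set.univ fun x => f x uu θθ)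
    (hg_conv : ∀ (uu : Euc m) (θθ : Euc p) (j : Fin q),
      ConvexOn ℝ Set.univ fun x => g x uu θθ j)
    -- A2
    (hΘ : Convex ℝ Θ)
    -- R1: nonempty compact feasible sets with Slater points, uniformly bounded
    (hR1 : ∀ uu ∈ 𝒰, ∀ θθ ∈ Θ, IsCompact (Feas g uu θθ) ∧
      ∃ xb ∈ Feas g uu θθ, ∀ j, g xb uu θθ j < 0)
    (hR1bd : ∃ M > 0, ∀ uu ∈ 𝒰, ∀ θθ ∈ Θ, ∀ x ∈ Feas g uu θθ, ‖x‖ ≤ M)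
    -- data
    (u : Fin n → Euc m) (y : Fin n → Euc d) (hu : ∀ i, u i ∈ 𝒰) :
    ContinuousOn (fun t : Euc p × ℝ => QnR f g n u y t.1 t.2) (Θ ×ˢ Set.Ioi (0 : ℝ)) :=
  statement4_general n f g 𝒰 Θ hf_cont hg_cont hf_conv hg_conv hR1 hR1bd u y hu
end
end

section
/- Suppose Assumption A3 holds: g(x,u,θ) = g₀(x,u) does not depend on θ, and f(x,u,θ) = f₀(x,u) + Σ_{j=1}^p θ_j f_j(x,u) is affine in θ. Fix points x̄_i ∈ ℝ^d and u_i ∈ ℝ^m for i = 1,…,n, and let Θ ⊆ ℝ^p be convex. Then the set { (θ, (λ_i)_{i=1}^n, (ε_i)_{i=1}^n) : θ ∈ Θ, and for each i, λ_i ≥ 0 and f(x̄_i,u_i,θ) ≤ f(x',u_i,θ) + ⟨λ_i, g₀(x',u_i)⟩ + ε_i for all x' ∈ ℝ^d } is convex; consequently SP-IOP-RISK-SAA — minimizing the linear objective (1/n) Σ_{i=1}^n ε_i over this set — is a convex optimization problem. -/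
open Set Metric Filter MeasureTheory ProbabilityTheory

noncomputable section

/-!
Under A3 the constraint `f(x̄ᵢ, uᵢ, θ) ≤ f(x', uᵢ, θ) + ⟨λᵢ, g₀(x', uᵢ)⟩ + εᵢ` has both sides
affine in the unknowns `(θ, λ, ε)`, so for each `i` and `x'` it cuts out a convex set.
The feasible set is the intersection of these sets with the convex cylinder over `Θ` and the
half-spaces `λᵢⱼ ≥ 0`, and the objective is linear.
-/

section
variable {𝕜 E β : Type*} [Semiring 𝕜] [PartialOrder 𝕜] [AddCommMonoid E] [Module 𝕜 E]
  [AddCommGroup β] [PartialOrder β] [IsOrderedAddMonoid β] [Module 𝕜 β] [PosSMulMono 𝕜 β]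

theorem convex_setOf_le_of_convexOn_of_concaveOn {f g : E → β} (hf : ConvexOn 𝕜 univ f)
    (hg : ConcaveOn 𝕜 univ g) : Convex 𝕜 {x | f x ≤ g x} := by
  simpa [sub_nonpos] using (hf.sub hg).convex_le 0

end

theorem isLinearMap_sum_mul {E ι : Type*} [AddCommGroup E] [Module ℝ E] [Fintype ι]
    {π : E → ι → ℝ} (hπ : IsLinearMap ℝ π) (w : ι → ℝ) :
    IsLinearMap ℝ fun x => ∑ k, π x k * w k := by
  constructor
  · intro x y
    simp [hπ.map_add, add_mul, Finset.sum_add_distrib]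
  · intro c x
    simp [hπ.map_smul, Finset.mul_sum, mul_assoc]

section
variable {d m p q n : ℕ}

def riskSaaFeasibleSet (f0 : Euc d → Euc m → ℝ) (fc : Fin p → Euc d → Euc m → ℝ)
    (g0 : Euc d → Euc m → Fin q → ℝ) (Θ : Set (Euc p)) (xb : Fin n → Euc d)
    (u : Fin n → Euc m) : Set (Euc p × (Fin n → Fin q → ℝ) × (Fin n → ℝ)) :=
  {t | t.1 ∈ Θ ∧ ∀ i, (∀ j, 0 ≤ t.2.1 i j) ∧
    ∀ x' : Euc d,
      f0 (xb i) (u i) + ∑ jp, t.1 jp * fc jp (xb i) (u i) ≤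
        (f0 x' (u i) + ∑ jp, t.1 jp * fc jp x' (u i)) +
          ∑ j, t.2.1 i j * g0 x' (u i) j + t.2.2 i}

theorem convex_riskSaaFeasibleSet (f0 : Euc d → Euc m → ℝ) (fc : Fin p → Euc d → Euc m → ℝ)
    (g0 : Euc d → Euc m → Fin q → ℝ) {Θ : Set (Euc p)} (hΘ : Convex ℝ Θ) (xb : Fin n → Euc d)
    (u : Fin n → Euc m) : Convex ℝ (riskSaaFeasibleSet f0 fc g0 Θ xb u) := by
  have hθ : IsLinearMap ℝ fun t : Euc p × (Fin n → Fin q → ℝ) × (Fin n → ℝ) =>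
      (t.1 : Fin p → ℝ) := ⟨fun _ _ => rfl, fun _ _ => rfl⟩
  have hlam (i : Fin n) : IsLinearMap ℝ fun t : Euc p × (Fin n → Fin q → ℝ) × (Fin n → ℝ) =>
      t.2.1 i := ⟨fun _ _ => rfl, fun _ _ => rfl⟩
  have heps (i : Fin n) : IsLinearMap ℝ fun t : Euc p × (Fin n → Fin q → ℝ) × (Fin n → ℝ) =>
      t.2.2 i := ⟨fun _ _ => rfl, fun _ _ => rfl⟩
  simp only [riskSaaFeasibleSet, ofPred_and, ofPred_forall]
  refine (hΘ.linear_preimage (LinearMap.fst ℝ _ _)).inter (convex_iInter fun i =>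
    (convex_iInter fun j => ?_).inter (convex_iInter fun x' => ?_))
  · exact convex_halfSpace_ge ⟨fun _ _ => rfl, fun _ _ => rfl⟩ 0
  · exact convex_setOf_le_of_convexOn_of_concaveOn
      ((convexOn_const _ convex_univ).add
        (((isLinearMap_sum_mul hθ _).mk' _).convexOn convex_univ))
      ((((concaveOn_const _ convex_univ).add
        (((isLinearMap_sum_mul hθ _).mk' _).concaveOn convex_univ)).add
        (((isLinearMap_sum_mul (hlam i) _).mk' _).concaveOn convex_univ)).add
        (((heps i).mk' _).concaveOn convex_univ))

end

/-- Proposition 12 (convexity of SP-IOP-RISK-SAA): under A3 — the constraints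
`g(x,u,θ) = g₀(x,u)` do not depend on `θ` and the objective
`f(x,u,θ) = f₀(x,u) + Σ_j θ_j f_j(x,u)` is affine in `θ` — and convexity of `Θ`,
the feasible set of SP-IOP-RISK-SAA in the variables `(θ, (λ_i), (ε_i))` is convex,
and minimizing the linear objective `(1/n) Σ_i ε_i` over it is a convex problem. -/
theorem statement8 {d m p q : ℕ} (n : ℕ)
    (f0 : Euc d → Euc m → ℝ) (fc : Fin p → Euc d → Euc m → ℝ)
    (g0 : Euc d → Euc m → Fin q → ℝ)
    (Θ : Set (Euc p)) (hΘ : Convex ℝ Θ)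
    (xb : Fin n → Euc d) (u : Fin n → Euc m) :
    Convex ℝ {t : Euc p × (Fin n → Fin q → ℝ) × (Fin n → ℝ) |
      t.1 ∈ Θ ∧ ∀ i, (∀ j, 0 ≤ t.2.1 i j) ∧
        ∀ x' : Euc d,
          f0 (xb i) (u i) + ∑ jp, t.1 jp * fc jp (xb i) (u i) ≤
            (f0 x' (u i) + ∑ jp, t.1 jp * fc jp x' (u i)) +
              ∑ j, t.2.1 i j * g0 x' (u i) j + t.2.2 i} ∧
    ConvexOn ℝ {t : Euc p × (Fin n → Fin q → ℝ) × (Fin n → ℝ) |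
      t.1 ∈ Θ ∧ ∀ i, (∀ j, 0 ≤ t.2.1 i j) ∧
        ∀ x' : Euc d,
          f0 (xb i) (u i) + ∑ jp, t.1 jp * fc jp (xb i) (u i) ≤
            (f0 x' (u i) + ∑ jp, t.1 jp * fc jp x' (u i)) +
              ∑ j, t.2.1 i j * g0 x' (u i) j + t.2.2 i}
      (fun t => (1 / n : ℝ) * ∑ i, t.2.2 i) := by
  have hS := convex_riskSaaFeasibleSet f0 fc g0 hΘ xb u
  have hobj : IsLinearMap ℝ fun t : Euc p × (Fin n → Fin q → ℝ) × (Fin n → ℝ) =>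
      (1 / n : ℝ) * ∑ i, t.2.2 i :=
    ⟨fun x y => by simp [Finset.sum_add_distrib, mul_add],
      fun c x => by simp [Finset.mul_sum, mul_left_comm]⟩
  exact ⟨hS, (hobj.mk' _).convexOn hS⟩
end
end

section
/- Suppose Assumptions A1 (with f and g jointly continuous), A2, R1 and R2 hold in the probabilistic setting, and additionally f(·,u,θ) is strictly convex on ℝ^d for each (u,θ) ∈ 𝒰 × Θ. Let θ̂_n : Ω → Θ be a sequence of measurable estimators that is nearly optimal in probability for the random objectives θ ↦ Q_n^ω(θ). Then Q(θ̂_n) converges in probability to inf{ Q(θ) : θ ∈ Θ }. -/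
/-!
Strict convexity makes the solution `s(u, θ)` of the forward problem unique, and Slater's condition
lets the feasible set vary continuously, so a Berge-type argument shows that `s` is continuous on
`𝒰 × Θ`. Both risks are then averages of the loss `‖y - s(u, θ)‖²`, which is continuous in `θ` and
dominated by `(‖y‖ + M)²`. Wald's argument finishes the proof: around each point of the compact `Θ`
the infimum of the loss over a small ball has expectation close to the risk at the centre, so the
strong law for finitely many such envelopes keeps the empirical risk, with probability tending to
one, nowhere on `Θ` much below the population risk. An empirical minimiser near `θ̂_n` therefore
has population risk at most the minimal one plus a small error, and uniform continuity of the risk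
on the compact `Θ` transfers this to `θ̂_n`.
-/


open Set Metric Filter MeasureTheory ProbabilityTheory

noncomputable section

/-- The random sample-average risk `Q_n^ω(θ)` of RISK-SAA. -/
def Qnw {d m p q : ℕ} {Ω : Type} (f : Euc d → Euc m → Euc p → ℝ)
    (g : Euc d → Euc m → Euc p → Fin q → ℝ)
    (U : ℕ → Ω → Euc m) (Y : ℕ → Ω → Euc d) (n : ℕ) (ω : Ω) (θ : Euc p) : ℝ :=
  sInf ((fun x : Fin n → Euc d => (1 / n : ℝ) * ∑ i, ‖Y i.val ω - x i‖ ^ 2) ''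
    {x | ∀ i : Fin n, x i ∈ Sol f g (U i.val ω) θ})

/-- The population risk `Q(θ)` of RISK. -/
def Qpop {d m p q : ℕ} {Ω : Type} [MeasurableSpace Ω] (P : Measure Ω)
    (f : Euc d → Euc m → Euc p → ℝ) (g : Euc d → Euc m → Euc p → Fin q → ℝ)
    (U : ℕ → Ω → Euc m) (Y : ℕ → Ω → Euc d) (θ : Euc p) : ℝ :=
  ∫ ω, sInf ((fun x => ‖Y 0 ω - x‖ ^ 2) '' Sol f g (U 0 ω) θ) ∂P

open Topology

theorem subset_closure_setOf_forall_lt_of_slater {E ι : Type*} [AddCommGroup E] [Module ℝ E]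
    [TopologicalSpace E] [IsTopologicalAddGroup E] [ContinuousSMul ℝ E] {g : ι → E → ℝ}
    (hg : ∀ j, ConvexOn ℝ univ (g j)) {xb : E} (hxb : ∀ j, g j xb < 0) :
    {x | ∀ j, g j x ≤ 0} ⊆ closure {x | ∀ j, g j x < 0} := by
  intro x hx
  have hpath : Tendsto (fun t : ℝ => (1 - t) • x + t • xb) (𝓝[>] 0) (𝓝 x) := by
    have hcont : Continuous fun t : ℝ => (1 - t) • x + t • xb := by fun_prop
    simpa using (hcont.tendsto 0).mono_left nhdsWithin_le_nhds
  refine mem_closure_of_tendsto hpath ?_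
  filter_upwards [Ioo_mem_nhdsGT one_pos] with t ⟨ht0, ht1⟩ j
  calc g j ((1 - t) • x + t • xb) ≤ (1 - t) • g j x + t • g j xb :=
        (hg j).2 (mem_univ _) (mem_univ _) (by linarith) ht0.le (by ring)
    _ < 0 := by simp only [smul_eq_mul]; nlinarith [hx j, hxb j]

section SolutionMap

variable {d m p q : ℕ} {f : Euc d → Euc m → Euc p → ℝ} {g : Euc d → Euc m → Euc p → Fin q → ℝ}
  {u : Euc m} {θ : Euc p}

theorem convex_Feas (hg : ∀ j, ConvexOn ℝ univ fun x => g x u θ j) : Convex ℝ (Feas g u θ) := by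
  simp only [Feas, ofPred_forall]
  exact convex_iInter fun j => by simpa using (hg j).convex_le 0

theorem Sol_nonempty (hf : Continuous fun x => f x u θ) (hcpt : IsCompact (Feas g u θ))
    (hne : (Feas g u θ).Nonempty) : (Sol f g u θ).Nonempty :=
  let ⟨x, hx, hmin⟩ := hcpt.exists_isMinOn hne hf.continuousOn
  ⟨x, hx, isMinOn_iff.1 hmin⟩

theorem Sol_subsingleton (hg : ∀ j, ConvexOn ℝ univ fun x => g x u θ j)
    (hf : StrictConvexOn ℝ univ fun x => f x u θ) : (Sol f g u θ).Subsingleton :=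
  fun _ hx _ hy => (hf.subset (subset_univ _) (convex_Feas hg)).eq_of_isMinOn
    (isMinOn_iff.2 hx.2) (isMinOn_iff.2 hy.2) hx.1 hy.1

open scoped Classical in
def solMap (f : Euc d → Euc m → Euc p → ℝ) (g : Euc d → Euc m → Euc p → Fin q → ℝ)
    (u : Euc m) (θ : Euc p) : Euc d :=
  if h : (Sol f g u θ).Nonempty then h.some else 0

theorem Sol_eq_singleton_solMap (hne : (Sol f g u θ).Nonempty)
    (hss : (Sol f g u θ).Subsingleton) : Sol f g u θ = {solMap f g u θ} := by
  have hmem : solMap f g u θ ∈ Sol f g u θ := by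
    rw [solMap, dif_pos hne]
    exact hne.some_mem
  exact hss.eq_singleton_of_mem hmem

theorem mem_Sol_of_tendsto_s10
    (hf_cont : Continuous fun t : Euc d × Euc m × Euc p => f t.1 t.2.1 t.2.2)
    (hg_cont : ∀ j, Continuous fun t : Euc d × Euc m × Euc p => g t.1 t.2.1 t.2.2 j)
    (hg : ∀ j, ConvexOn ℝ univ fun x => g x u θ j) {xb : Euc d} (hxb : ∀ j, g xb u θ j < 0)
    {ι : Type*} {l : Filter ι} [l.NeBot] {w : ι → Euc m × Euc p} {x : ι → Euc d} {a : Euc d}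
    (hw : Tendsto w l (𝓝 (u, θ))) (hx : Tendsto x l (𝓝 a))
    (hsol : ∀ᶠ i in l, x i ∈ Sol f g (w i).1 (w i).2) : a ∈ Sol f g u θ := by
  have hxw : Tendsto (fun i => (x i, w i)) l (𝓝 (a, u, θ)) := hx.prodMk_nhds hw
  refine ⟨fun j => le_of_tendsto ((hg_cont j).tendsto _ |>.comp hxw)
    (hsol.mono fun i hi => hi.1 j), fun x' hx' => ?_⟩
  -- Only strictly feasible competitors stay feasible near `(u, θ)`; by Slater they are dense.
  have hstrict : {xt | ∀ j, g xt u θ j < 0} ⊆ {xt | f a u θ ≤ f xt u θ} := by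
    intro xt hxt
    have hxtw : Tendsto (fun i => (xt, w i)) l (𝓝 (xt, u, θ)) := tendsto_const_nhds.prodMk_nhds hw
    have hfeas : ∀ᶠ i in l, xt ∈ Feas g (w i).1 (w i).2 :=
      (eventually_all.2 fun j => ((hg_cont j).tendsto _ |>.comp hxtw).eventually_lt_const
        (hxt j)).mono fun i hi j => (hi j).le
    exact le_of_tendsto_of_tendsto (hf_cont.tendsto _ |>.comp hxw) (hf_cont.tendsto _ |>.comp hxtw)
      ((hsol.and hfeas).mono fun i hi => hi.1.2 xt hi.2)
  have hclosed : IsClosed {xt | f a u θ ≤ f xt u θ} :=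
    isClosed_le continuous_const
      (hf_cont.comp (continuous_id.prodMk continuous_const : Continuous fun xt => (xt, u, θ)))
  exact closure_minimal hstrict hclosed
    (subset_closure_setOf_forall_lt_of_slater (g := fun j x => g x u θ j) hg hxb hx')

theorem continuousOn_solMap
    (hf_cont : Continuous fun t : Euc d × Euc m × Euc p => f t.1 t.2.1 t.2.2)
    (hg_cont : ∀ j, Continuous fun t : Euc d × Euc m × Euc p => g t.1 t.2.1 t.2.2 j)
    (hg_conv : ∀ u θ j, ConvexOn ℝ univ fun x => g x u θ j) {𝒰 : Set (Euc m)} {Θ : Set (Euc p)}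
    (hSol : ∀ u ∈ 𝒰, ∀ θ ∈ Θ, Sol f g u θ = {solMap f g u θ})
    (hslater : ∀ u ∈ 𝒰, ∀ θ ∈ Θ, ∃ xb, ∀ j, g xb u θ j < 0)
    {M : ℝ} (hM : ∀ u ∈ 𝒰, ∀ θ ∈ Θ, ‖solMap f g u θ‖ ≤ M) :
    ContinuousOn (fun w : Euc m × Euc p => solMap f g w.1 w.2) (𝒰 ×ˢ Θ) := by
  have hmem : ∀ w ∈ 𝒰 ×ˢ Θ, solMap f g w.1 w.2 ∈ Sol f g w.1 w.2 := fun w hw => by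
    rw [hSol _ hw.1 _ hw.2]; rfl
  rintro ⟨u, θ⟩ ⟨hu, hθ⟩
  refine (isCompact_closedBall (0 : Euc d) M).tendsto_nhds_of_unique_mapClusterPt ?_ ?_
  · filter_upwards [self_mem_nhdsWithin] with w hw
    exact mem_closedBall_zero_iff.2 (hM _ hw.1 _ hw.2)
  · intro a _ ha
    obtain ⟨l, hl, hla⟩ := mapClusterPt_iff_ultrafilter.1 ha
    obtain ⟨xb, hxb⟩ := hslater u hu θ hθ
    have hlim := mem_Sol_of_tendsto_s10 hf_cont hg_cont (hg_conv u θ) hxb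
      (tendsto_id.mono_left (hl.trans nhdsWithin_le_nhds)) hla
      (Filter.mem_of_superset (hl self_mem_nhdsWithin) hmem)
    rwa [hSol u hu θ hθ] at hlim

end SolutionMap

theorem tendsto_measure_of_ae_subset_biUnion {α ι κ : Type*} [MeasurableSpace α] {μ : Measure α}
    {l : Filter κ} {s : Set ι} (hs : s.Finite) {E : κ → Set α} {B : ι → κ → Set α}
    (hE : ∀ k, E k ≤ᵐ[μ] ⋃ i ∈ s, B i k) (hB : ∀ i ∈ s, Tendsto (fun k => μ (B i k)) l (𝓝 0)) :
    Tendsto (fun k => μ (E k)) l (𝓝 0) := by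
  lift s to Finset ι using hs
  have hsum : Tendsto (fun k => ∑ i ∈ s, μ (B i k)) l (𝓝 0) := by
    simpa using tendsto_finsetSum s hB
  refine tendsto_of_tendsto_of_tendsto_of_le_of_le tendsto_const_nhds hsum (fun _ => zero_le)
    fun k => (measure_mono_ae (hE k)).trans ?_
  simpa only [Finset.set_biUnion_coe] using measure_biUnion_finset_le s fun i => B i k

theorem bddBelow_image_of_abs_le {α : Type*} {φ : α → ℝ} {s : Set α} {b : ℝ}
    (h : ∀ x ∈ s, |φ x| ≤ b) : BddBelow (φ '' s) :=
  ⟨-b, by rintro _ ⟨x, hx, rfl⟩; exact neg_le_of_abs_le (h x hx)⟩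

-- Nonemptiness matters: `infDist x ∅ = 0`.
theorem IsCompact.exists_mem_argmin_dist_lt {T : Type*} [PseudoMetricSpace T] {Θ : Set T}
    (hΘ : IsCompact Θ) (hne : Θ.Nonempty) {F : T → ℝ} (hF : ContinuousOn F Θ) {x : T} {ρ : ℝ}
    (h : infDist x {θ ∈ Θ | ∀ θ' ∈ Θ, F θ ≤ F θ'} < ρ) :
    ∃ θ ∈ {θ ∈ Θ | ∀ θ' ∈ Θ, F θ ≤ F θ'}, dist x θ < ρ := by
  refine (infDist_lt_iff ?_).1 h
  obtain ⟨θm, hθm, hmin⟩ := hΘ.exists_isMinOn hne hF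
  exact ⟨θm, hθm, isMinOn_iff.1 hmin⟩

section BallInf

variable {Z T : Type*} [PseudoMetricSpace T] {L : Z → T → ℝ} {Θ C : Set T} {θ₀ : T} {r : ℝ}
  {z : Z}

/-- Taken over a countable dense subset `C` of `Θ`, this infimum is measurable in `z` yet, by
continuity, equal to the infimum of `L z` over `Θ ∩ ball θ₀ r`. -/
def ballInf (L : Z → T → ℝ) (C : Set T) (θ₀ : T) (r : ℝ) (z : Z) : ℝ :=
  ⨅ θ : ↥(C ∩ ball θ₀ r), L z θ

theorem measurable_ballInf [MeasurableSpace Z] (hC : C.Countable)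
    (hL : ∀ θ ∈ C, Measurable fun z => L z θ) : Measurable (ballInf L C θ₀ r) := by
  have : Countable ↥(C ∩ ball θ₀ r) := (hC.mono inter_subset_left).to_subtype
  exact Measurable.iInf fun θ => hL θ θ.2.1

theorem nonempty_inter_ball (hΘC : Θ ⊆ closure C) (hθ₀ : θ₀ ∈ Θ) (hr : 0 < r) :
    Nonempty ↥(C ∩ ball θ₀ r) :=
  let ⟨θ, hθr, hθC⟩ := mem_closure_iff.1 (hΘC hθ₀) _ isOpen_ball (mem_ball_self hr)
  ⟨⟨θ, hθC, hθr⟩⟩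

theorem ballInf_le (hCΘ : C ⊆ Θ) (hΘC : Θ ⊆ closure C) (hcont : ContinuousOn (L z) Θ)
    (hbdd : BddBelow (L z '' Θ)) {θ : T} (hθ : θ ∈ Θ) (hθr : θ ∈ ball θ₀ r) :
    ballInf L C θ₀ r z ≤ L z θ := by
  have hsub : C ∩ ball θ₀ r ⊆ Θ := inter_subset_left.trans hCΘ
  have hθcl : θ ∈ closure (C ∩ ball θ₀ r) := by
    simpa only [inter_comm] using isOpen_ball.inter_closure ⟨hθr, hΘC hθ⟩
  refine ContinuousWithinAt.closure_le (f := fun _ => ballInf L C θ₀ r z) hθcl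
    continuousWithinAt_const ((hcont θ hθ).mono hsub) fun θ' hθ' => ?_
  exact ciInf_le ((hbdd.mono (image_mono hsub)).mono (by rintro _ ⟨θ'', rfl⟩; exact
    ⟨θ'', θ''.2, rfl⟩)) (⟨θ', hθ'⟩ : ↥(C ∩ ball θ₀ r))

theorem abs_ballInf_le (hCΘ : C ⊆ Θ) (hΘC : Θ ⊆ closure C) (hcont : ContinuousOn (L z) Θ)
    {b : ℝ} (hb : ∀ θ ∈ Θ, |L z θ| ≤ b) (hθ₀ : θ₀ ∈ Θ) (hr : 0 < r) :
    |ballInf L C θ₀ r z| ≤ b := by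
  have := nonempty_inter_ball hΘC hθ₀ hr
  refine abs_le.2 ⟨le_ciInf fun θ => neg_le_of_abs_le (hb θ (hCΘ θ.2.1)), ?_⟩
  exact (ballInf_le hCΘ hΘC hcont (bddBelow_image_of_abs_le hb) hθ₀ (mem_ball_self hr)).trans
    (le_of_abs_le (hb θ₀ hθ₀))

theorem tendsto_ballInf (hCΘ : C ⊆ Θ) (hΘC : Θ ⊆ closure C) (hcont : ContinuousOn (L z) Θ)
    (hbdd : BddBelow (L z '' Θ)) (hθ₀ : θ₀ ∈ Θ) :
    Tendsto (fun r => ballInf L C θ₀ r z) (𝓝[>] 0) (𝓝 (L z θ₀)) := by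
  refine tendsto_order.2 ⟨fun a ha => ?_, fun a ha => ?_⟩
  · obtain ⟨b, hab, hb⟩ := exists_between ha
    obtain ⟨η, hη, hηb⟩ := Metric.mem_nhdsWithin_iff.1 (hcont θ₀ hθ₀ (Ioi_mem_nhds hb))
    filter_upwards [Ioo_mem_nhdsGT hη] with r ⟨hr, hrη⟩
    have := nonempty_inter_ball hΘC hθ₀ hr
    exact hab.trans_le (le_ciInf fun θ => (hηb ⟨ball_subset_ball hrη.le θ.2.2, hCΘ θ.2.1⟩).le)
  · filter_upwards [self_mem_nhdsWithin] with r hr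
    exact (ballInf_le hCΘ hΘC hcont hbdd hθ₀ (mem_ball_self hr)).trans_lt ha

end BallInf

section SampleMeans

variable {Ω : Type*} [MeasurableSpace Ω] {P : Measure Ω}

theorem tendsto_measure_abs_avg_sub_integral_ge [IsFiniteMeasure P] {X : ℕ → Ω → ℝ}
    (hint : Integrable (X 0) P) (hindep : Pairwise fun i j => IndepFun (X i) (X j) P)
    (hident : ∀ i, IdentDistrib (X i) (X 0) P P) {ε : ℝ} (hε : 0 < ε) :
    Tendsto (fun n : ℕ => P {ω | ε ≤ |(n : ℝ)⁻¹ * ∑ i ∈ Finset.range n, X i ω - ∫ ω', X 0 ω' ∂P|})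
      atTop (𝓝 0) := by
  have hmeas (n : ℕ) :
      AEStronglyMeasurable (fun ω => (n : ℝ)⁻¹ * ∑ i ∈ Finset.range n, X i ω) P :=
    (Finset.aestronglyMeasurable_fun_sum _
      fun i _ => (hident i).aestronglyMeasurable_iff.2 hint.1).const_mul _
  have hlim := tendstoInMeasure_of_tendsto_ae hmeas
    (by simpa only [smul_eq_mul] using strong_law_ae X hint hindep hident)
  simpa only [Real.dist_eq] using tendstoInMeasure_iff_dist.1 hlim ε hε

variable {Z T : Type*} [MeasurableSpace Z] [PseudoMetricSpace T] {Zs : ℕ → Ω → Z} {S : Set Z}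
  {Θ : Set T} {L : Z → T → ℝ} {D : Z → ℝ}

theorem continuousOn_risk (hZ : ∀ i, Measurable (Zs i)) (hZS : ∀ᵐ ω ∂P, Zs 0 ω ∈ S)
    (hLmeas : ∀ θ ∈ Θ, Measurable fun z => L z θ) (hLcont : ∀ z ∈ S, ContinuousOn (L z) Θ)
    (hLD : ∀ z ∈ S, ∀ θ ∈ Θ, |L z θ| ≤ D z) (hD : Integrable (fun ω => D (Zs 0 ω)) P) :
    ContinuousOn (fun θ => ∫ ω, L (Zs 0 ω) θ ∂P) Θ :=
  continuousOn_of_dominated (fun θ hθ => ((hLmeas θ hθ).comp (hZ 0)).aestronglyMeasurable)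
    (fun θ hθ => hZS.mono fun _ hω => hLD _ hω θ hθ) hD (hZS.mono fun _ hω => hLcont _ hω)

theorem tendsto_integral_ballInf {C : Set T} (hC : C.Countable) (hCΘ : C ⊆ Θ)
    (hΘC : Θ ⊆ closure C) (hZ : ∀ i, Measurable (Zs i)) (hZS : ∀ᵐ ω ∂P, Zs 0 ω ∈ S)
    (hLmeas : ∀ θ ∈ Θ, Measurable fun z => L z θ) (hLcont : ∀ z ∈ S, ContinuousOn (L z) Θ)
    (hLD : ∀ z ∈ S, ∀ θ ∈ Θ, |L z θ| ≤ D z) (hD : Integrable (fun ω => D (Zs 0 ω)) P)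
    {θ₀ : T} (hθ₀ : θ₀ ∈ Θ) :
    Tendsto (fun r => ∫ ω, ballInf L C θ₀ r (Zs 0 ω) ∂P) (𝓝[>] 0)
      (𝓝 (∫ ω, L (Zs 0 ω) θ₀ ∂P)) := by
  refine tendsto_integral_filter_of_dominated_convergence (fun ω => D (Zs 0 ω))
    (Eventually.of_forall fun r =>
      ((measurable_ballInf hC fun θ hθ => hLmeas θ (hCΘ hθ)).comp (hZ 0)).aestronglyMeasurable)
    ?_ hD (hZS.mono fun ω hω => tendsto_ballInf hCΘ hΘC (hLcont _ hω)
      (bddBelow_image_of_abs_le (hLD _ hω)) hθ₀)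
  filter_upwards [self_mem_nhdsWithin] with r hr
  filter_upwards [hZS] with ω hω
  exact abs_ballInf_le hCΘ hΘC (hLcont _ hω) (hLD _ hω) hθ₀ hr

theorem ae_forall_mem_of_identDistrib (hident : ∀ i, IdentDistrib (Zs i) (Zs 0) P P)
    (hS : MeasurableSet S) (hZS : ∀ᵐ ω ∂P, Zs 0 ω ∈ S) : ∀ᵐ ω ∂P, ∀ i, Zs i ω ∈ S :=
  ae_all_iff.2 fun i => (hident i).symm.ae_mem_snd hS hZS

theorem integrable_comp_of_abs_le {h : Z → ℝ} (hh : Measurable h) (hZ : Measurable (Zs 0))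
    (hZS : ∀ᵐ ω ∂P, Zs 0 ω ∈ S) (hhD : ∀ z ∈ S, |h z| ≤ D z)
    (hD : Integrable (fun ω => D (Zs 0 ω)) P) : Integrable (fun ω => h (Zs 0 ω)) P :=
  hD.mono' (hh.comp hZ).aestronglyMeasurable (hZS.mono fun _ hω => hhD _ hω)

theorem tendsto_measure_abs_avg_comp_sub_integral_ge [IsFiniteMeasure P] {h : Z → ℝ}
    (hh : Measurable h) (hint : Integrable (fun ω => h (Zs 0 ω)) P)
    (hindep : Pairwise fun i j => IndepFun (Zs i) (Zs j) P)
    (hident : ∀ i, IdentDistrib (Zs i) (Zs 0) P P) {ε : ℝ} (hε : 0 < ε) :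
    Tendsto (fun n : ℕ => P {ω | ε ≤
      |(n : ℝ)⁻¹ * ∑ i ∈ Finset.range n, h (Zs i ω) - ∫ ω', h (Zs 0 ω') ∂P|}) atTop (𝓝 0) :=
  tendsto_measure_abs_avg_sub_integral_ge (X := fun i ω => h (Zs i ω)) hint
    (fun _ _ hij => (hindep hij).comp hh hh) (fun i => (hident i).comp hh) hε

/-- Wald's one-sided uniform law of large numbers. -/
theorem tendsto_measure_exists_avg_lt_risk_sub [IsFiniteMeasure P] (hZ : ∀ i, Measurable (Zs i))
    (hindep : Pairwise fun i j => IndepFun (Zs i) (Zs j) P)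
    (hident : ∀ i, IdentDistrib (Zs i) (Zs 0) P P) (hS : MeasurableSet S)
    (hZS : ∀ᵐ ω ∂P, Zs 0 ω ∈ S) (hΘ : IsCompact Θ)
    (hLmeas : ∀ θ ∈ Θ, Measurable fun z => L z θ) (hLcont : ∀ z ∈ S, ContinuousOn (L z) Θ)
    (hLD : ∀ z ∈ S, ∀ θ ∈ Θ, |L z θ| ≤ D z) (hD : Integrable (fun ω => D (Zs 0 ω)) P)
    {ε : ℝ} (hε : 0 < ε) :
    Tendsto (fun n : ℕ => P {ω | ∃ θ ∈ Θ,
      (n : ℝ)⁻¹ * ∑ i ∈ Finset.range n, L (Zs i ω) θ < ∫ ω', L (Zs 0 ω') θ ∂P - ε})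
      atTop (𝓝 0) := by
  set Q := fun θ => ∫ ω, L (Zs 0 ω) θ ∂P
  obtain ⟨C, hCΘ, hC, hΘC⟩ := hΘ.isSeparable.exists_countable_dense_subset
  have hΨmeas (θ₀ : T) (r : ℝ) : Measurable (ballInf L C θ₀ r) :=
    measurable_ballInf hC fun θ hθ => hLmeas θ (hCΘ hθ)
  have hradius : ∀ θ₀ ∈ Θ, ∃ r > 0, (∀ θ ∈ Θ, θ ∈ ball θ₀ r → Q θ < Q θ₀ + ε / 3) ∧
      Q θ₀ - ε / 3 < ∫ ω, ballInf L C θ₀ r (Zs 0 ω) ∂P := by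
    intro θ₀ hθ₀
    obtain ⟨η, hη, hQη⟩ := Metric.continuousWithinAt_iff.1
      (continuousOn_risk hZ hZS hLmeas hLcont hLD hD θ₀ hθ₀) (ε / 3) (by positivity)
    have hΨlim := tendsto_integral_ballInf hC hCΘ hΘC hZ hZS hLmeas hLcont hLD hD hθ₀
    obtain ⟨r, hr, hrη⟩ := ((hΨlim.eventually_const_lt
      (sub_lt_self _ (by positivity : (0 : ℝ) < ε / 3))).and (Ioo_mem_nhdsGT hη)).exists
    refine ⟨r, hrη.1, fun θ hθ hθr => ?_, hr⟩
    have hdist := hQη hθ (lt_trans hθr hrη.2)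
    rw [Real.dist_eq] at hdist
    linarith [(abs_lt.1 hdist).2]
  choose! r hr0 hQr hΨr using hradius
  obtain ⟨I, hIΘ, hIfin, hcover⟩ := hΘ.elim_finite_subcover_image (fun θ₀ _ => isOpen_ball)
    fun θ hθ => mem_biUnion hθ (mem_ball_self (hr0 θ hθ))
  refine tendsto_measure_of_ae_subset_biUnion hIfin (B := fun θ₀ n => {ω | ε / 3 ≤
    |(n : ℝ)⁻¹ * ∑ i ∈ Finset.range n, ballInf L C θ₀ (r θ₀) (Zs i ω) -
      ∫ ω', ballInf L C θ₀ (r θ₀) (Zs 0 ω') ∂P|}) (fun n => ?_) fun θ₀ hθ₀ => ?_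
  · filter_upwards [ae_forall_mem_of_identDistrib hident hS hZS] with ω hω ⟨θ, hθ, hlt⟩
    obtain ⟨θ₀, hθ₀I, hθr⟩ := mem_iUnion₂.1 (hcover hθ)
    refine mem_iUnion₂.2 ⟨θ₀, hθ₀I, ?_⟩
    have henv : (n : ℝ)⁻¹ * ∑ i ∈ Finset.range n, ballInf L C θ₀ (r θ₀) (Zs i ω) ≤
        (n : ℝ)⁻¹ * ∑ i ∈ Finset.range n, L (Zs i ω) θ :=
      mul_le_mul_of_nonneg_left (Finset.sum_le_sum fun i _ => ballInf_le hCΘ hΘC (hLcont _ (hω i))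
        (bddBelow_image_of_abs_le (hLD _ (hω i))) hθ hθr) (by positivity)
    change _ < Q θ - ε at hlt
    have h1 := hQr θ₀ (hIΘ hθ₀I) θ hθ hθr
    have h2 := hΨr θ₀ (hIΘ hθ₀I)
    simp only [mem_ofPred_eq, le_abs]
    right
    linarith
  · exact tendsto_measure_abs_avg_comp_sub_integral_ge (hΨmeas θ₀ (r θ₀))
      (integrable_comp_of_abs_le (hΨmeas θ₀ (r θ₀)) (hZ 0) hZS
        (fun z hz => abs_ballInf_le hCΘ hΘC (hLcont z hz) (hLD z hz) (hIΘ hθ₀) (hr0 θ₀ (hIΘ hθ₀)))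
        hD) hindep hident (by positivity)

theorem ae_risk_sub_gt_subset_union (hident : ∀ i, IdentDistrib (Zs i) (Zs 0) P P)
    (hS : MeasurableSet S) (hZS : ∀ᵐ ω ∂P, Zs 0 ω ∈ S) (hΘ : IsCompact Θ)
    (hLcont : ∀ z ∈ S, ContinuousOn (L z) Θ) {Q : T → ℝ}
    (hQ : ∀ θ ∈ Θ, Q θ = ∫ ω, L (Zs 0 ω) θ ∂P) {F : ℕ → Ω → T → ℝ}
    (hF : ∀ n ω, (∀ i, Zs i ω ∈ S) → ∀ θ ∈ Θ,
      F n ω θ = (n : ℝ)⁻¹ * ∑ i ∈ Finset.range n, L (Zs i ω) θ)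
    {θh : ℕ → Ω → T} (hθmem : ∀ n ω, θh n ω ∈ Θ) {θs : T} (hθsΘ : θs ∈ Θ)
    (hθs : IsMinOn Q Θ θs) {δ ρ : ℝ} (hρ : 0 < ρ)
    (hQρ : ∀ θ ∈ Θ, ∀ θ' ∈ Θ, dist θ θ' < ρ → dist (Q θ) (Q θ') < δ / 3) (n : ℕ) :
    ({ω | δ < |Q (θh n ω) - Q θs|} : Set Ω) ≤ᵐ[P]
      ({ω | ∃ θ ∈ Θ, (n : ℝ)⁻¹ * ∑ i ∈ Finset.range n, L (Zs i ω) θ <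
        ∫ ω', L (Zs 0 ω') θ ∂P - δ / 3} ∪
      {ω | δ / 3 ≤ |(n : ℝ)⁻¹ * ∑ i ∈ Finset.range n, L (Zs i ω) θs - ∫ ω', L (Zs 0 ω') θs ∂P|} ∪
      {ω | infDist (θh n ω) {θ ∈ Θ | ∀ θ' ∈ Θ, F n ω θ ≤ F n ω θ'} > ρ / 2} : Set Ω) := by
  filter_upwards [ae_forall_mem_of_identDistrib hident hS hZS] with ω hω
    (hfar : δ < |Q (θh n ω) - Q θs|)
  by_contra hnear
  change ω ∉ (_ : Set Ω) at hnear
  simp only [mem_union, mem_ofPred_eq, not_or, not_exists, not_and, not_lt, not_le] at hnear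
  obtain ⟨⟨hunif, hθsLLN⟩, hopt⟩ := hnear
  have hFcont : ContinuousOn (F n ω) Θ :=
    (continuousOn_const.mul (continuousOn_finsetSum _ fun i _ => hLcont _ (hω i))).congr
      (hF n ω hω)
  obtain ⟨θt, ⟨hθtΘ, hθtmin⟩, hθtd⟩ :=
    hΘ.exists_mem_argmin_dist_lt ⟨_, hθmem n ω⟩ hFcont (hopt.trans_lt (half_lt_self hρ))
  have h1 := hQρ _ (hθmem n ω) _ hθtΘ hθtd
  have h2 := hunif θt hθtΘ
  have h3 := hθtmin θs hθsΘ
  rw [Real.dist_eq] at h1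
  rw [← hQ _ hθtΘ] at h2
  rw [← hQ _ hθsΘ] at hθsLLN
  rw [hF n ω hω _ hθtΘ, hF n ω hω _ hθsΘ] at h3
  rw [abs_of_nonneg (sub_nonneg.2 (isMinOn_iff.1 hθs _ (hθmem n ω)))] at hfar
  linarith [(abs_lt.1 h1).2, (abs_lt.1 hθsLLN).2]

theorem tendsto_measure_abs_risk_sub_sInf_gt [IsProbabilityMeasure P]
    (hZ : ∀ i, Measurable (Zs i)) (hindep : Pairwise fun i j => IndepFun (Zs i) (Zs j) P)
    (hident : ∀ i, IdentDistrib (Zs i) (Zs 0) P P) (hS : MeasurableSet S)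
    (hZS : ∀ᵐ ω ∂P, Zs 0 ω ∈ S) (hΘ : IsCompact Θ)
    (hLmeas : ∀ θ ∈ Θ, Measurable fun z => L z θ) (hLcont : ∀ z ∈ S, ContinuousOn (L z) Θ)
    (hLD : ∀ z ∈ S, ∀ θ ∈ Θ, |L z θ| ≤ D z) (hD : Integrable (fun ω => D (Zs 0 ω)) P)
    {Q : T → ℝ} (hQ : ∀ θ ∈ Θ, Q θ = ∫ ω, L (Zs 0 ω) θ ∂P) {F : ℕ → Ω → T → ℝ}
    (hF : ∀ n ω, (∀ i, Zs i ω ∈ S) → ∀ θ ∈ Θ,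
      F n ω θ = (n : ℝ)⁻¹ * ∑ i ∈ Finset.range n, L (Zs i ω) θ)
    {θh : ℕ → Ω → T} (hθmem : ∀ n ω, θh n ω ∈ Θ)
    (hnearopt : ∀ δ > (0 : ℝ), Tendsto (fun n => P {ω |
      infDist (θh n ω) {θ ∈ Θ | ∀ θ' ∈ Θ, F n ω θ ≤ F n ω θ'} > δ}) atTop (𝓝 0)) :
    ∀ δ > (0 : ℝ), Tendsto (fun n => P {ω | |Q (θh n ω) - sInf (Q '' Θ)| > δ}) atTop (𝓝 0) := by
  intro δ hδ
  have hQcont : ContinuousOn Q Θ := (continuousOn_risk hZ hZS hLmeas hLcont hLD hD).congr hQ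
  obtain ⟨ω₀⟩ := nonempty_of_isProbabilityMeasure P
  obtain ⟨θs, hθsΘ, hθs⟩ := hΘ.exists_isMinOn ⟨_, hθmem 0 ω₀⟩ hQcont
  have hinf : sInf (Q '' Θ) = Q θs :=
    IsLeast.csInf_eq ⟨mem_image_of_mem Q hθsΘ, forall_mem_image.2 (isMinOn_iff.1 hθs)⟩
  obtain ⟨ρ, hρ, hQρ⟩ := Metric.uniformContinuousOn_iff.1
    (hΘ.uniformContinuousOn_of_continuous hQcont) (δ / 3) (by positivity)
  have hLθs := hLmeas θs hθsΘ
  have hbad := ((tendsto_measure_exists_avg_lt_risk_sub hZ hindep hident hS hZS hΘ hLmeas hLcont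
    hLD hD (by positivity : (0 : ℝ) < δ / 3)).add
    (tendsto_measure_abs_avg_comp_sub_integral_ge hLθs
      (integrable_comp_of_abs_le hLθs (hZ 0) hZS (fun z hz => hLD z hz θs hθsΘ) hD) hindep hident
      (by positivity : (0 : ℝ) < δ / 3))).add (hnearopt (ρ / 2) (by positivity))
  rw [add_zero, add_zero] at hbad
  refine tendsto_of_tendsto_of_tendsto_of_le_of_le tendsto_const_nhds hbad (fun _ => zero_le)
    fun n => ?_
  rw [hinf]
  exact (measure_mono_ae (ae_risk_sub_gt_subset_union hident hS hZS hΘ hLcont hQ hF hθmem hθsΘ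
    hθs hρ hQρ n)).trans ((measure_union_le _ _).trans (add_le_add_left (measure_union_le _ _) _))

end SampleMeans

theorem integrable_sq_norm_add_const {Ω E : Type*} [MeasurableSpace Ω] {P : Measure Ω}
    [IsFiniteMeasure P] [NormedAddCommGroup E] {X : Ω → E} (hX : AEStronglyMeasurable X P)
    (h : Integrable (fun ω => ‖X ω‖ ^ 2) P) (c : ℝ) :
    Integrable (fun ω => (‖X ω‖ + c) ^ 2) P := by
  refine ((h.const_mul 2).add (integrable_const (2 * c ^ 2))).mono'
    ((hX.norm.add aestronglyMeasurable_const).pow 2) (Eventually.of_forall fun ω => ?_)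
  rw [Real.norm_eq_abs, abs_of_nonneg (sq_nonneg _)]
  change _ ≤ 2 * ‖X ω‖ ^ 2 + 2 * c ^ 2
  nlinarith [sq_nonneg (‖X ω‖ - c)]

section Loss

variable {d m p q : ℕ} {f : Euc d → Euc m → Euc p → ℝ} {g : Euc d → Euc m → Euc p → Fin q → ℝ}
  {𝒰 : Set (Euc m)} {Θ : Set (Euc p)}

open scoped Classical in
-- Cut off outside `𝒰`, where `solMap` need not be measurable.
def solLoss (f : Euc d → Euc m → Euc p → ℝ) (g : Euc d → Euc m → Euc p → Fin q → ℝ)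
    (𝒰 : Set (Euc m)) (z : Euc m × Euc d) (θ : Euc p) : ℝ :=
  if z.1 ∈ 𝒰 then ‖z.2 - solMap f g z.1 θ‖ ^ 2 else 0

theorem solLoss_of_mem {z : Euc m × Euc d} (hz : z.1 ∈ 𝒰) (θ : Euc p) :
    solLoss f g 𝒰 z θ = ‖z.2 - solMap f g z.1 θ‖ ^ 2 :=
  if_pos hz

theorem measurable_solLoss (h𝒰 : MeasurableSet 𝒰)
    (hcont : ContinuousOn (fun w : Euc m × Euc p => solMap f g w.1 w.2) (𝒰 ×ˢ Θ)) {θ : Euc p}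
    (hθ : θ ∈ Θ) : Measurable fun z : Euc m × Euc d => solLoss f g 𝒰 z θ := by
  classical
  have hsol : ContinuousOn (fun z : Euc m × Euc d => solMap f g z.1 θ) (𝒰 ×ˢ univ) :=
    hcont.comp (continuous_fst.prodMk continuous_const).continuousOn fun _ hz => ⟨hz.1, hθ⟩
  have hon : ContinuousOn (fun z : Euc m × Euc d => ‖z.2 - solMap f g z.1 θ‖ ^ 2) (𝒰 ×ˢ univ) :=
    ((continuous_snd.continuousOn.sub hsol).norm).pow 2
  convert hon.measurable_piecewise (g := fun _ => 0) continuousOn_const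
    (h𝒰.prod MeasurableSet.univ) using 1
  ext z
  by_cases hz : z.1 ∈ 𝒰 <;> simp [solLoss, piecewise, hz]

theorem continuousOn_solLoss
    (hcont : ContinuousOn (fun w : Euc m × Euc p => solMap f g w.1 w.2) (𝒰 ×ˢ Θ))
    {z : Euc m × Euc d} (hz : z.1 ∈ 𝒰) : ContinuousOn (solLoss f g 𝒰 z) Θ := by
  have hon : ContinuousOn (fun θ => ‖z.2 - solMap f g z.1 θ‖ ^ 2) Θ :=
    ((continuousOn_const.sub (hcont.comp (continuous_const.prodMk continuous_id).continuousOn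
      fun _ hθ => ⟨hz, hθ⟩)).norm).pow 2
  exact hon.congr fun θ _ => solLoss_of_mem hz θ

theorem abs_solLoss_le {M : ℝ} (hM : ∀ u ∈ 𝒰, ∀ θ ∈ Θ, ‖solMap f g u θ‖ ≤ M)
    {z : Euc m × Euc d} (hz : z.1 ∈ 𝒰) {θ : Euc p} (hθ : θ ∈ Θ) :
    |solLoss f g 𝒰 z θ| ≤ (‖z.2‖ + M) ^ 2 := by
  rw [solLoss_of_mem hz, abs_of_nonneg (sq_nonneg _)]
  gcongr
  exact (norm_sub_le _ _).trans (by linarith [hM _ hz _ hθ])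

variable {Ω : Type} {U : ℕ → Ω → Euc m} {Y : ℕ → Ω → Euc d}

theorem Qpop_eq_integral_solLoss [MeasurableSpace Ω] {P : Measure Ω} (hU : ∀ᵐ ω ∂P, U 0 ω ∈ 𝒰)
    (hSol : ∀ u ∈ 𝒰, ∀ θ ∈ Θ, Sol f g u θ = {solMap f g u θ}) {θ : Euc p} (hθ : θ ∈ Θ) :
    Qpop P f g U Y θ = ∫ ω, solLoss f g 𝒰 (U 0 ω, Y 0 ω) θ ∂P := by
  refine integral_congr_ae (hU.mono fun ω hω => ?_)
  dsimp only
  rw [hSol _ hω _ hθ, image_singleton, csInf_singleton]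
  exact (solLoss_of_mem (z := (U 0 ω, Y 0 ω)) hω θ).symm

theorem Qnw_eq_avg_solLoss {n : ℕ} {ω : Ω} (hU : ∀ i < n, U i ω ∈ 𝒰)
    (hSol : ∀ u ∈ 𝒰, ∀ θ ∈ Θ, Sol f g u θ = {solMap f g u θ}) {θ : Euc p} (hθ : θ ∈ Θ) :
    Qnw f g U Y n ω θ = (n : ℝ)⁻¹ * ∑ i ∈ Finset.range n, solLoss f g 𝒰 (U i ω, Y i ω) θ := by
  have hset : {x : Fin n → Euc d | ∀ i : Fin n, x i ∈ Sol f g (U i ω) θ} =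
      {fun i : Fin n => solMap f g (U i ω) θ} := by
    ext x
    simp only [mem_ofPred_eq, mem_singleton_iff, funext_iff]
    exact forall_congr' fun i => by rw [hSol _ (hU i i.2) _ hθ, mem_singleton_iff]
  rw [Qnw, hset, image_singleton, csInf_singleton, one_div,
    ← Fin.sum_univ_eq_sum_range (fun i => solLoss f g 𝒰 (U i ω, Y i ω) θ) n]
  exact congrArg _ (Finset.sum_congr rfl fun i _ =>
    (solLoss_of_mem (z := (U i ω, Y i ω)) (hU i i.2) θ).symm)

end Loss

theorem statement10_general {d m p q : ℕ}
    (f : Euc d → Euc m → Euc p → ℝ) (g : Euc d → Euc m → Euc p → Fin q → ℝ)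
    (𝒰 : Set (Euc m)) (Θ : Set (Euc p))
    (Ω : Type) [MeasurableSpace Ω] (P : Measure Ω) [IsProbabilityMeasure P]
    (U : ℕ → Ω → Euc m) (Y : ℕ → Ω → Euc d)
    (hUmeas : ∀ i, Measurable (U i)) (hYmeas : ∀ i, Measurable (Y i))
    -- the pairs (u_i, y_i) are i.i.d.
    (hindep : iIndepFun (fun i ω => (U i ω, Y i ω)) P)
    (hident : ∀ i, Measure.map (fun ω => (U i ω, Y i ω)) P =
      Measure.map (fun ω => (U 0 ω, Y 0 ω)) P)
    -- 𝒰 is closed and carries the distribution of u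
    (h𝒰closed : IsClosed 𝒰) (h𝒰full : P {ω | U 0 ω ∈ 𝒰} = 1)
    -- A1, with joint continuity of f and g
    (hf_cont : Continuous fun t : Euc d × Euc m × Euc p => f t.1 t.2.1 t.2.2)
    (hg_cont : ∀ j, Continuous fun t : Euc d × Euc m × Euc p => g t.1 t.2.1 t.2.2 j)
    (hg_conv : ∀ (uu : Euc m) (θθ : Euc p) (j : Fin q),
      ConvexOn ℝ Set.univ fun x => g x uu θθ j)
    -- strict convexity of f(·,u,θ) on 𝒰 × Θ
    (hf_strict : ∀ uu ∈ 𝒰, ∀ θθ ∈ Θ, StrictConvexOn ℝ Set.univ fun x => f x uu θθ)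
    -- R1
    (hR1 : ∀ uu ∈ 𝒰, ∀ θθ ∈ Θ, IsCompact (Feas g uu θθ) ∧
      ∃ xb ∈ Feas g uu θθ, ∀ j, g xb uu θθ j < 0)
    (hR1bd : ∃ M > 0, ∀ uu ∈ 𝒰, ∀ θθ ∈ Θ, ∀ x ∈ Feas g uu θθ, ‖x‖ ≤ M)
    -- R2
    (hΘcpt : IsCompact Θ) (hy2 : Integrable (fun ω => ‖Y 0 ω‖ ^ 2) P)
    -- the estimators, nearly optimal in probability for Q_n^ω
    (θh : ℕ → Ω → Euc p)
    (hθmem : ∀ n ω, θh n ω ∈ Θ)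
    (hnearopt : ∀ δ > (0 : ℝ), Tendsto (fun n => P {ω |
      Metric.infDist (θh n ω)
        {θ ∈ Θ | ∀ θ' ∈ Θ, Qnw f g U Y n ω θ ≤ Qnw f g U Y n ω θ'} > δ})
      atTop (nhds 0)) :
    -- conclusion: Q(θ̂_n) →p inf{Q(θ) : θ ∈ Θ}
    ∀ δ > (0 : ℝ), Tendsto (fun n => P {ω |
      |Qpop P f g U Y (θh n ω) - sInf (Qpop P f g U Y '' Θ)| > δ})
      atTop (nhds 0) := by
  obtain ⟨M, -, hM⟩ := hR1bd
  have hSol : ∀ u ∈ 𝒰, ∀ θ ∈ Θ, Sol f g u θ = {solMap f g u θ} := fun u hu θ hθ =>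
    let ⟨hcpt, xb, hxb, _⟩ := hR1 u hu θ hθ
    Sol_eq_singleton_solMap
      (Sol_nonempty (hf_cont.comp (continuous_id.prodMk continuous_const :
        Continuous fun x => (x, u, θ))) hcpt ⟨xb, hxb⟩)
      (Sol_subsingleton (hg_conv u θ) (hf_strict u hu θ hθ))
  have hsolM : ∀ u ∈ 𝒰, ∀ θ ∈ Θ, ‖solMap f g u θ‖ ≤ M := fun u hu θ hθ =>
    hM u hu θ hθ _ (hSol u hu θ hθ ▸ mem_singleton _ : solMap f g u θ ∈ Sol f g u θ).1
  have hcont := continuousOn_solMap hf_cont hg_cont hg_conv hSol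
    (fun u hu θ hθ => let ⟨_, xb, _, hxb⟩ := hR1 u hu θ hθ; ⟨xb, hxb⟩) hsolM
  have hZ (i : ℕ) : Measurable fun ω => (U i ω, Y i ω) := (hUmeas i).prodMk (hYmeas i)
  have hU0 : ∀ᵐ ω ∂P, U 0 ω ∈ 𝒰 :=
    (ae_iff_measure_eq ((hUmeas 0) h𝒰closed.measurableSet).nullMeasurableSet).2
      (by rw [h𝒰full, measure_univ])
  exact tendsto_measure_abs_risk_sub_sInf_gt (S := 𝒰 ×ˢ univ) hZ
    (fun _ _ hij => hindep.indepFun hij)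
    (fun i => ⟨(hZ i).aemeasurable, (hZ 0).aemeasurable, hident i⟩)
    (h𝒰closed.measurableSet.prod MeasurableSet.univ) (hU0.mono fun _ hω => ⟨hω, trivial⟩)
    hΘcpt (fun _ hθ => measurable_solLoss h𝒰closed.measurableSet hcont hθ)
    (fun _ hz => continuousOn_solLoss hcont hz.1) (fun _ hz _ hθ => abs_solLoss_le hsolM hz.1 hθ)
    (integrable_sq_norm_add_const (hYmeas 0).aestronglyMeasurable hy2 M)
    (fun _ hθ => Qpop_eq_integral_solLoss hU0 hSol hθ)
    (fun _ _ hω _ hθ => Qnw_eq_avg_solLoss (fun i _ => (hω i).1) hSol hθ) hθmem hnearopt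

/-- Theorem 5 (risk consistency under strict convexity): under A1 (with joint
continuity), A2, R1, R2 and strict convexity of `f(·,u,θ)` on `𝒰 × Θ`, if the
measurable estimators `θ̂_n` are nearly optimal in probability for `θ ↦ Q_n^ω(θ)`,
then `Q(θ̂_n)` converges in probability to `inf{ Q(θ) : θ ∈ Θ }`. -/
theorem statement10 {d m p q : ℕ}
    (f : Euc d → Euc m → Euc p → ℝ) (g : Euc d → Euc m → Euc p → Fin q → ℝ)
    (𝒰 : Set (Euc m)) (Θ : Set (Euc p))
    (Ω : Type) [MeasurableSpace Ω] (P : Measure Ω) [IsProbabilityMeasure P]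
    (U : ℕ → Ω → Euc m) (Y : ℕ → Ω → Euc d)
    (hUmeas : ∀ i, Measurable (U i)) (hYmeas : ∀ i, Measurable (Y i))
    -- the pairs (u_i, y_i) are i.i.d.
    (hindep : iIndepFun (fun i ω => (U i ω, Y i ω)) P)
    (hident : ∀ i, Measure.map (fun ω => (U i ω, Y i ω)) P =
      Measure.map (fun ω => (U 0 ω, Y 0 ω)) P)
    -- 𝒰 is closed and carries the distribution of u
    (h𝒰closed : IsClosed 𝒰) (h𝒰full : P {ω | U 0 ω ∈ 𝒰} = 1)
    -- A1, with joint continuity of f and g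
    (hf_cont : Continuous fun t : Euc d × Euc m × Euc p => f t.1 t.2.1 t.2.2)
    (hg_cont : ∀ j, Continuous fun t : Euc d × Euc m × Euc p => g t.1 t.2.1 t.2.2 j)
    (hf_conv : ∀ (uu : Euc m) (θθ : Euc p), ConvexOn ℝ Set.univ fun x => f x uu θθ)
    (hg_conv : ∀ (uu : Euc m) (θθ : Euc p) (j : Fin q),
      ConvexOn ℝ Set.univ fun x => g x uu θθ j)
    -- strict convexity of f(·,u,θ) on 𝒰 × Θ
    (hf_strict : ∀ uu ∈ 𝒰, ∀ θθ ∈ Θ, StrictConvexOn ℝ Set.univ fun x => f x uu θθ)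
    -- A2
    (hΘ : Convex ℝ Θ)
    -- R1
    (hR1 : ∀ uu ∈ 𝒰, ∀ θθ ∈ Θ, IsCompact (Feas g uu θθ) ∧
      ∃ xb ∈ Feas g uu θθ, ∀ j, g xb uu θθ j < 0)
    (hR1bd : ∃ M > 0, ∀ uu ∈ 𝒰, ∀ θθ ∈ Θ, ∀ x ∈ Feas g uu θθ, ‖x‖ ≤ M)
    -- R2
    (hΘcpt : IsCompact Θ) (hy2 : Integrable (fun ω => ‖Y 0 ω‖ ^ 2) P)
    -- the estimators, nearly optimal in probability for Q_n^ω
    (θh : ℕ → Ω → Euc p) (hθmeas : ∀ n, Measurable (θh n))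
    (hθmem : ∀ n ω, θh n ω ∈ Θ)
    (hnearopt : ∀ δ > (0 : ℝ), Tendsto (fun n => P {ω |
      Metric.infDist (θh n ω)
        {θ ∈ Θ | ∀ θ' ∈ Θ, Qnw f g U Y n ω θ ≤ Qnw f g U Y n ω θ'} > δ})
      atTop (nhds 0)) :
    -- conclusion: Q(θ̂_n) →p inf{Q(θ) : θ ∈ Θ}
    ∀ δ > (0 : ℝ), Tendsto (fun n => P {ω |
      |Qpop P f g U Y (θh n ω) - sInf (Qpop P f g U Y '' Θ)| > δ})
      atTop (nhds 0) :=
  statement10_general f g 𝒰 Θ Ω P U Y hUmeas hYmeas hindep hident h𝒰closed h𝒰full hf_cont hg_cont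
    hg_conv hf_strict hR1 hR1bd hΘcpt hy2 θh hθmem hnearopt
end
end

section
/- Suppose Assumptions A1, A2 and R1 hold, f and g are jointly continuous, f(·,u,θ) is strictly convex on ℝ^d for each (u,θ) ∈ 𝒰 × Θ, Θ is compact, and fix data (u_i, y_i) with u_i ∈ 𝒰. Then for every d > 0 there exists Δ > 0 such that: for every δ with 0 < δ ≤ Δ, every finite δ-net 𝒯(δ) ⊆ Θ of Θ, and every θ̂ ∈ argmin{ Q_n(θ) : θ ∈ 𝒯(δ) }, one has dist(θ̂, argmin{ Q_n(θ) : θ ∈ Θ }) < d. -/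
/-!
Strict convexity makes each solution set `S(uᵢ, θ)` a singleton `{sᵢ(θ)}`. The Slater point makes
every feasible point a limit of strictly feasible ones, and strict feasibility persists under
perturbation of `θ`; hence the graph of `θ ↦ S(u, θ)` is closed over `Θ`. Together with the
uniform bound `M`, this makes `sᵢ` continuous on `Θ`, so `Q_n θ = (1/n) ∑ ‖yᵢ - sᵢ(θ)‖²` is
continuous on the compact set `Θ`. For such a function, points at distance `≥ d` from the argmin
have values bounded away from the minimum by some `η > 0`, while a fine net contains a point whose
value is within `η` of the minimum; a minimizer over the net therefore lies within `d` of the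
argmin.
-/

open Set Metric Filter MeasureTheory ProbabilityTheory

noncomputable section

open Topology

theorem MapClusterPt.prodMk_of_tendsto {α X Y : Type*} [TopologicalSpace X] [TopologicalSpace Y]
    {l : Filter α} {f : α → X} {g : α → Y} {x : X} {y : Y} (hf : MapClusterPt x l f)
    (hg : Tendsto g l (𝓝 y)) : MapClusterPt (x, y) l fun a => (f a, g a) := by
  rw [((𝓝 x).basis_sets.prod_nhds (𝓝 y).basis_sets).mapClusterPt_iff_frequently]
  rintro ⟨U, V⟩ ⟨hU, hV⟩
  exact (hf.frequently hU).and_eventually (hg hV)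

section ArgminOfNet

variable {α : Type*} [PseudoMetricSpace α]

def argminSet (Q : α → ℝ) (Θ : Set α) : Set α := {θ ∈ Θ | ∀ θ' ∈ Θ, Q θ ≤ Q θ'}

variable {Θ : Set α} {Q : α → ℝ}

theorem IsCompact.exists_pos_infDist_argminSet_lt_of_lt_add (hΘ : IsCompact Θ)
    (hQ : ContinuousOn Q Θ) {θstar : α} (hmin : IsMinOn Q Θ θstar) {ε : ℝ} (hε : 0 < ε) :
    ∃ η > 0, ∀ θ ∈ Θ, Q θ < Q θstar + η → infDist θ (argminSet Q Θ) < ε := by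
  set V := Θ ∩ {θ | ε ≤ infDist θ (argminSet Q Θ)}
  have hV : IsCompact V :=
    hΘ.inter_right (isClosed_le continuous_const (continuous_infDist_pt _))
  have hgap : ∀ θ ∈ V, Q θstar < Q θ := by
    rintro θ ⟨hθ, hfar⟩
    by_contra! hle
    have hθA : θ ∈ argminSet Q Θ := ⟨hθ, fun θ' hθ' => hle.trans (hmin hθ')⟩
    linarith [infDist_zero_of_mem hθA, show ε ≤ infDist θ (argminSet Q Θ) from hfar]
  obtain ⟨a, hlt, ha⟩ := hV.exists_forall_le' (hQ.mono inter_subset_left) hgap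
  refine ⟨a - Q θstar, sub_pos.2 hlt, fun θ hθ hQθ => ?_⟩
  by_contra! hfar
  linarith [ha θ ⟨hθ, hfar⟩]

theorem IsCompact.exists_pos_infDist_argminSet_lt_of_net (hΘ : IsCompact Θ)
    (hQ : ContinuousOn Q Θ) {ε : ℝ} (hε : 0 < ε) :
    ∃ Δ > 0, ∀ T ⊆ Θ, (∀ θ ∈ Θ, ∃ t ∈ T, dist t θ ≤ Δ) →
      ∀ θh ∈ T, (∀ t ∈ T, Q θh ≤ Q t) → infDist θh (argminSet Q Θ) < ε := by
  rcases Θ.eq_empty_or_nonempty with rfl | hne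
  · exact ⟨1, one_pos, fun T hT _ θh hθh _ => (hT hθh).elim⟩
  obtain ⟨θstar, hθstar, hmin⟩ := hΘ.exists_isMinOn hne hQ
  obtain ⟨η, hη, hnear⟩ := hΘ.exists_pos_infDist_argminSet_lt_of_lt_add hQ hmin hε
  obtain ⟨δ, hδ, hcont⟩ := Metric.continuousWithinAt_iff.1 (hQ θstar hθstar) η hη
  refine ⟨δ / 2, half_pos hδ, fun T hT hnet θh hθh hminT => hnear θh (hT hθh) ?_⟩
  obtain ⟨t, ht, htθ⟩ := hnet θstar hθstar
  have hQt := hcont (hT ht) (by linarith)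
  rw [Real.dist_eq, abs_sub_lt_iff] at hQt
  linarith [hminT t ht]

end ArgminOfNet

def StrictFeas {d m p q : ℕ} (g : Euc d → Euc m → Euc p → Fin q → ℝ) (u : Euc m) (θ : Euc p) :
    Set (Euc d) :=
  {x | ∀ j, g x u θ j < 0}

section Solutions

variable {d m p q : ℕ} {f : Euc d → Euc m → Euc p → ℝ}
  {g : Euc d → Euc m → Euc p → Fin q → ℝ} {u : Euc m} {θ : Euc p}

theorem convex_feas (hg_conv : ∀ j, ConvexOn ℝ univ fun x => g x u θ j) :
    Convex ℝ (Feas g u θ) := by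
  have h : Feas g u θ = ⋂ j, {x | g x u θ j ≤ 0} := by ext; simp [Feas]
  rw [h]
  exact convex_iInter fun j => by simpa using (hg_conv j).convex_le 0

theorem openSegment_subset_strictFeas (hg_conv : ∀ j, ConvexOn ℝ univ fun x => g x u θ j)
    {x xb : Euc d} (hx : x ∈ Feas g u θ) (hxb : xb ∈ StrictFeas g u θ) :
    openSegment ℝ x xb ⊆ StrictFeas g u θ := by
  rintro _ ⟨a, b, ha, hb, hab, rfl⟩ j
  calc g (a • x + b • xb) u θ j ≤ a • g x u θ j + b • g xb u θ j :=
        (hg_conv j).2 trivial trivial ha.le hb.le hab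
    _ < 0 := by
        simp only [smul_eq_mul]
        nlinarith [hx j, hxb j]

theorem feas_subset_closure_strictFeas (hg_conv : ∀ j, ConvexOn ℝ univ fun x => g x u θ j)
    {xb : Euc d} (hxb : xb ∈ StrictFeas g u θ) :
    Feas g u θ ⊆ closure (StrictFeas g u θ) := fun x hx =>
  closure_mono (openSegment_subset_strictFeas hg_conv hx hxb)
    (segment_subset_closure_openSegment (left_mem_segment ℝ x xb))

theorem sol_nonempty (hf_cont : Continuous fun x => f x u θ) (hcpt : IsCompact (Feas g u θ))
    (hne : (Feas g u θ).Nonempty) : (Sol f g u θ).Nonempty := by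
  obtain ⟨x, hx, hmin⟩ := hcpt.exists_isMinOn hne hf_cont.continuousOn
  exact ⟨x, hx, fun x' hx' => hmin hx'⟩

theorem sol_subsingleton (hg_conv : ∀ j, ConvexOn ℝ univ fun x => g x u θ j)
    (hf_strict : StrictConvexOn ℝ univ fun x => f x u θ) : (Sol f g u θ).Subsingleton :=
  fun _ hx _ hy => (hf_strict.subset (subset_univ _) (convex_feas hg_conv)).eq_of_isMinOn
    (fun _ hz => hx.2 _ hz) (fun _ hz => hy.2 _ hz) hx.1 hy.1

theorem mem_sol_of_mem_closure_graph
    (hf_cont : Continuous fun t : Euc d × Euc m × Euc p => f t.1 t.2.1 t.2.2)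
    (hg_cont : ∀ j, Continuous fun t : Euc d × Euc m × Euc p => g t.1 t.2.1 t.2.2 j)
    (hg_conv : ∀ j, ConvexOn ℝ univ fun x => g x u θ j)
    (hslater : (StrictFeas g u θ).Nonempty) {x : Euc d}
    (h : (x, θ) ∈ closure {w : Euc d × Euc p | w.1 ∈ Sol f g u w.2}) : x ∈ Sol f g u θ := by
  have hslice : Continuous fun w : Euc d × Euc p => (w.1, u, w.2) := by fun_prop
  have hg_cont' (j : Fin q) : Continuous fun w : Euc d × Euc p => g w.1 u w.2 j :=
    (hg_cont j).comp hslice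
  have hf_cont' : Continuous fun w : Euc d × Euc p => f w.1 u w.2 := hf_cont.comp hslice
  refine ⟨?_, ?_⟩
  · have hclosed : IsClosed {w : Euc d × Euc p | w.1 ∈ Feas g u w.2} := by
      change IsClosed {w : Euc d × Euc p | ∀ j, g w.1 u w.2 j ≤ 0}
      simpa only [ofPred_forall] using
        isClosed_iInter fun j => isClosed_le (hg_cont' j) continuous_const
    have hsub : {w : Euc d × Euc p | w.1 ∈ Sol f g u w.2} ⊆ {w | w.1 ∈ Feas g u w.2} :=
      fun w hw => hw.1
    exact closure_minimal hsub hclosed h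
  · intro x' hx'
    obtain ⟨xb, hxb⟩ := hslater
    have hstrict : ∀ z ∈ StrictFeas g u θ, f x u θ ≤ f z u θ := by
      intro z hz
      -- `z` stays strictly feasible for parameters near `θ`, where the solutions beat it.
      have hU : IsOpen {w : Euc d × Euc p | z ∈ StrictFeas g u w.2} := by
        change IsOpen {w : Euc d × Euc p | ∀ j, g z u w.2 j < 0}
        simpa only [ofPred_forall, Function.comp_def] using isOpen_iInter_of_finite fun j =>
          isOpen_lt ((hg_cont' j).comp (continuous_const.prodMk continuous_snd)) continuous_const
      have hsub : {w : Euc d × Euc p | z ∈ StrictFeas g u w.2} ∩ {w | w.1 ∈ Sol f g u w.2} ⊆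
          {w | f w.1 u w.2 ≤ f z u w.2} :=
        fun w ⟨hwU, hwG⟩ => hwG.2 z fun j => (hwU j).le
      exact closure_minimal hsub (isClosed_le hf_cont' (hf_cont'.comp
        (continuous_const.prodMk continuous_snd))) (hU.inter_closure ⟨hz, h⟩)
    exact closure_minimal hstrict (isClosed_le continuous_const
      (hf_cont'.comp (continuous_id.prodMk continuous_const)))
      (feas_subset_closure_strictFeas hg_conv hxb hx')

theorem continuousOn_of_sol_eq_singleton
    (hf_cont : Continuous fun t : Euc d × Euc m × Euc p => f t.1 t.2.1 t.2.2)
    (hg_cont : ∀ j, Continuous fun t : Euc d × Euc m × Euc p => g t.1 t.2.1 t.2.2 j)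
    {Θ : Set (Euc p)} (hg_conv : ∀ θ ∈ Θ, ∀ j, ConvexOn ℝ univ fun x => g x u θ j)
    (hslater : ∀ θ ∈ Θ, (StrictFeas g u θ).Nonempty) {M : ℝ}
    (hbd : ∀ θ ∈ Θ, ∀ x ∈ Feas g u θ, ‖x‖ ≤ M) {s : Euc p → Euc d}
    (hs : ∀ θ ∈ Θ, Sol f g u θ = {s θ}) : ContinuousOn s Θ := by
  have hs_mem : ∀ θ ∈ Θ, s θ ∈ Sol f g u θ := fun θ hθ => (hs θ hθ).symm ▸ rfl
  intro θ hθ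
  refine (isCompact_closedBall (0 : Euc d) M).tendsto_nhds_of_unique_mapClusterPt ?_ ?_
  · filter_upwards [self_mem_nhdsWithin] with θ' hθ'
    exact mem_closedBall_zero_iff.2 (hbd θ' hθ' _ (hs_mem θ' hθ').1)
  · intro x _ hx
    have hgraph : (x, θ) ∈ closure {w : Euc d × Euc p | w.1 ∈ Sol f g u w.2} :=
      isClosed_closure.mem_of_mapClusterPt (hx.prodMk_of_tendsto (tendsto_id.mono_left
        nhdsWithin_le_nhds)) (eventually_nhdsWithin_of_forall fun θ' hθ' =>
          subset_closure (hs_mem θ' hθ'))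
    simpa [hs θ hθ] using mem_sol_of_mem_closure_graph hf_cont hg_cont (hg_conv θ hθ)
      (hslater θ hθ) hgraph

theorem exists_continuousOn_sol_eq_singleton
    (hf_cont : Continuous fun t : Euc d × Euc m × Euc p => f t.1 t.2.1 t.2.2)
    (hg_cont : ∀ j, Continuous fun t : Euc d × Euc m × Euc p => g t.1 t.2.1 t.2.2 j)
    {Θ : Set (Euc p)} (hg_conv : ∀ θ ∈ Θ, ∀ j, ConvexOn ℝ univ fun x => g x u θ j)
    (hf_strict : ∀ θ ∈ Θ, StrictConvexOn ℝ univ fun x => f x u θ)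
    (hcpt : ∀ θ ∈ Θ, IsCompact (Feas g u θ)) (hslater : ∀ θ ∈ Θ, (StrictFeas g u θ).Nonempty)
    {M : ℝ} (hbd : ∀ θ ∈ Θ, ∀ x ∈ Feas g u θ, ‖x‖ ≤ M) :
    ∃ s : Euc p → Euc d, ContinuousOn s Θ ∧ ∀ θ ∈ Θ, Sol f g u θ = {s θ} := by
  have hsol : ∀ θ, ∃ x, θ ∈ Θ → Sol f g u θ = {x} := by
    intro θ
    by_cases hθ : θ ∈ Θ
    · obtain ⟨xb, hxb⟩ := hslater θ hθ
      have hfθ : Continuous fun x => f x u θ :=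
        hf_cont.comp (continuous_id.prodMk (continuous_const (y := (u, θ))))
      obtain ⟨x, hx⟩ := sol_nonempty hfθ (hcpt θ hθ) ⟨xb, fun j => (hxb j).le⟩
      exact ⟨x, fun _ => (sol_subsingleton (hg_conv θ hθ) (hf_strict θ hθ)).eq_singleton_of_mem hx⟩
    · exact ⟨0, fun h => absurd h hθ⟩
  choose s hs using hsol
  exact ⟨s, continuousOn_of_sol_eq_singleton hf_cont hg_cont hg_conv hslater hbd hs, hs⟩

theorem qn_eq_of_sol_eq_singleton {n : ℕ} {u : Fin n → Euc m} (y : Fin n → Euc d)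
    {s : Fin n → Euc d} (hs : ∀ i, Sol f g (u i) θ = {s i}) :
    Qn f g n u y θ = (1 / n : ℝ) * ∑ i, ‖y i - s i‖ ^ 2 := by
  have hprod : {x : Fin n → Euc d | ∀ i, x i ∈ Sol f g (u i) θ} = {s} := by
    ext x
    simp [hs, funext_iff]
  rw [Qn, hprod, image_singleton, csInf_singleton]

end Solutions

theorem statement13_general {d m p q : ℕ} (n : ℕ)
    (f : Euc d → Euc m → Euc p → ℝ) (g : Euc d → Euc m → Euc p → Fin q → ℝ)
    (𝒰 : Set (Euc m)) (Θ : Set (Euc p))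
    (hf_cont : Continuous fun t : Euc d × Euc m × Euc p => f t.1 t.2.1 t.2.2)
    (hg_cont : ∀ j, Continuous fun t : Euc d × Euc m × Euc p => g t.1 t.2.1 t.2.2 j)
    (hg_conv : ∀ (uu : Euc m) (θθ : Euc p) (j : Fin q),
      ConvexOn ℝ Set.univ fun x => g x uu θθ j)
    (hf_strict : ∀ uu ∈ 𝒰, ∀ θθ ∈ Θ, StrictConvexOn ℝ Set.univ fun x => f x uu θθ)
    (hΘcpt : IsCompact Θ)
    (hR1 : ∀ uu ∈ 𝒰, ∀ θθ ∈ Θ, IsCompact (Feas g uu θθ) ∧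
      ∃ xb ∈ Feas g uu θθ, ∀ j, g xb uu θθ j < 0)
    (hR1bd : ∃ M > 0, ∀ uu ∈ 𝒰, ∀ θθ ∈ Θ, ∀ x ∈ Feas g uu θθ, ‖x‖ ≤ M)
    (u : Fin n → Euc m) (y : Fin n → Euc d) (hu : ∀ i, u i ∈ 𝒰) :
    ∀ dd > (0 : ℝ), ∃ Δ > (0 : ℝ),
      ∀ δ, 0 < δ → δ ≤ Δ →
        ∀ 𝒯 : Finset (Euc p), ↑𝒯 ⊆ Θ → (∀ θ ∈ Θ, ∃ t ∈ 𝒯, ‖t - θ‖ ≤ δ) →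
          ∀ θh ∈ 𝒯, (∀ t ∈ 𝒯, Qn f g n u y θh ≤ Qn f g n u y t) →
            Metric.infDist θh
              {θ ∈ Θ | ∀ θ' ∈ Θ, Qn f g n u y θ ≤ Qn f g n u y θ'} < dd := by
  obtain ⟨M, -, hM⟩ := hR1bd
  have hsol (i : Fin n) : ∃ s : Euc p → Euc d, ContinuousOn s Θ ∧
      ∀ θ ∈ Θ, Sol f g (u i) θ = {s θ} :=
    exists_continuousOn_sol_eq_singleton hf_cont hg_cont (fun θ _ => hg_conv (u i) θ)
      (hf_strict _ (hu i)) (fun θ hθ => (hR1 _ (hu i) θ hθ).1)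
      (fun θ hθ => (hR1 _ (hu i) θ hθ).2.imp fun _ => And.right) (hM _ (hu i))
  choose s hs_cont hs using hsol
  have hQ : ContinuousOn (Qn f g n u y) Θ :=
    (continuousOn_const.mul (continuousOn_finsetSum _ fun i _ =>
      (continuousOn_const.sub (hs_cont i)).norm.pow 2)).congr
      fun θ hθ => qn_eq_of_sol_eq_singleton y fun i => hs i θ hθ
  intro dd hdd
  obtain ⟨Δ, hΔ, hnet⟩ := hΘcpt.exists_pos_infDist_argminSet_lt_of_net hQ hdd
  refine ⟨Δ, hΔ, fun δ _ hδΔ 𝒯 h𝒯 hcover => hnet 𝒯 h𝒯 fun θ hθ => ?_⟩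
  obtain ⟨t, ht, htθ⟩ := hcover θ hθ
  exact ⟨t, ht, (dist_eq_norm t θ).trans_le (htθ.trans hδΔ)⟩

/-- Theorem 8 (correctness of the enumeration algorithm with `ε = 0` in the strictly
convex case): under A1, A2, R1 (with joint continuity, strict convexity of
`f(·,u,θ)` on `𝒰 × Θ`, and compact `Θ`), for every `d > 0` there exists `Δ > 0`
such that for every `0 < δ ≤ Δ`, every finite `δ`-net `𝒯 ⊆ Θ` of `Θ`, and every
minimizer `θ̂` of `Q_n` over `𝒯`, the point `θ̂` is within distance `d` of the
argmin set of `Q_n` over `Θ`. -/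
theorem statement13 {d m p q : ℕ} (n : ℕ)
    (f : Euc d → Euc m → Euc p → ℝ) (g : Euc d → Euc m → Euc p → Fin q → ℝ)
    (𝒰 : Set (Euc m)) (Θ : Set (Euc p))
    (hf_cont : Continuous fun t : Euc d × Euc m × Euc p => f t.1 t.2.1 t.2.2)
    (hg_cont : ∀ j, Continuous fun t : Euc d × Euc m × Euc p => g t.1 t.2.1 t.2.2 j)
    (hf_conv : ∀ (uu : Euc m) (θθ : Euc p), ConvexOn ℝ Set.univ fun x => f x uu θθ)
    (hg_conv : ∀ (uu : Euc m) (θθ : Euc p) (j : Fin q),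
      ConvexOn ℝ Set.univ fun x => g x uu θθ j)
    (hf_strict : ∀ uu ∈ 𝒰, ∀ θθ ∈ Θ, StrictConvexOn ℝ Set.univ fun x => f x uu θθ)
    (hΘ : Convex ℝ Θ) (hΘcpt : IsCompact Θ)
    (hR1 : ∀ uu ∈ 𝒰, ∀ θθ ∈ Θ, IsCompact (Feas g uu θθ) ∧
      ∃ xb ∈ Feas g uu θθ, ∀ j, g xb uu θθ j < 0)
    (hR1bd : ∃ M > 0, ∀ uu ∈ 𝒰, ∀ θθ ∈ Θ, ∀ x ∈ Feas g uu θθ, ‖x‖ ≤ M)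
    (u : Fin n → Euc m) (y : Fin n → Euc d) (hu : ∀ i, u i ∈ 𝒰) :
    ∀ dd > (0 : ℝ), ∃ Δ > (0 : ℝ),
      ∀ δ, 0 < δ → δ ≤ Δ →
        ∀ 𝒯 : Finset (Euc p), ↑𝒯 ⊆ Θ → (∀ θ ∈ Θ, ∃ t ∈ 𝒯, ‖t - θ‖ ≤ δ) →
          ∀ θh ∈ 𝒯, (∀ t ∈ 𝒯, Qn f g n u y θh ≤ Qn f g n u y t) →
            Metric.infDist θh
              {θ ∈ Θ | ∀ θ' ∈ Θ, Qn f g n u y θ ≤ Qn f g n u y θ'} < dd :=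
  statement13_general n f g 𝒰 Θ hf_cont hg_cont hg_conv hf_strict hΘcpt hR1 hR1bd u y hu
end
end

section
/- Define E_VIA : ℝ → ℝ by E_VIA(θ) = 36(12−θ)² + (2+θ)² + 121(2−θ)² + 16(8−θ)² for θ ≤ 2; E_VIA(θ) = 36(12−θ)² + (2+θ)² + 16(8−θ)² for 2 < θ ≤ 8; and E_VIA(θ) = 36(12−θ)² + (2+θ)² + 36(8−θ)² for θ > 8. Then E_VIA attains a unique minimum over the interval [0,10] at θ* = 718/73; in particular, the minimizer satisfies θ* ≠ 10. -/
open Set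

noncomputable section

/-- The population slack objective `4·E(ε_i²)` of the VIA heuristic in the
counterexample of Proposition 1. -/
def EVIA : ℝ → ℝ := fun θ =>
  if θ ≤ 2 then
    36 * (12 - θ) ^ 2 + (2 + θ) ^ 2 + 121 * (2 - θ) ^ 2 + 16 * (8 - θ) ^ 2
  else if θ ≤ 8 then
    36 * (12 - θ) ^ 2 + (2 + θ) ^ 2 + 16 * (8 - θ) ^ 2
  else
    36 * (12 - θ) ^ 2 + (2 + θ) ^ 2 + 36 * (8 - θ) ^ 2

/-!
On `(8, ∞)` the objective is the single quadratic `73 (θ - 718/73)² + 31392/73`, whose vertex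
lies in `(8, 10)`. On `(-∞, 8]` the term `36 (12 - θ)²` alone is at least `576`, which already
exceeds the minimal value `31392/73 < 431`.
-/

lemma EVIA_eq_of_eight_lt {θ : ℝ} (h : 8 < θ) :
    EVIA θ = 73 * (θ - 718 / 73) ^ 2 + 31392 / 73 := by
  rw [EVIA, if_neg (by linarith), if_neg (by linarith)]
  ring

lemma EVIA_minimizer : EVIA (718 / 73) = 31392 / 73 := by
  rw [EVIA_eq_of_eight_lt (by norm_num)]
  norm_num

lemma sq_add_sq_le_EVIA (θ : ℝ) : 36 * (12 - θ) ^ 2 + (2 + θ) ^ 2 ≤ EVIA θ := by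
  unfold EVIA
  split_ifs <;> nlinarith [sq_nonneg (2 - θ), sq_nonneg (8 - θ)]

lemma le_EVIA_of_le_eight {θ : ℝ} (h : θ ≤ 8) : 576 ≤ EVIA θ := by
  nlinarith [sq_add_sq_le_EVIA θ, sq_nonneg (2 + θ)]

/-- In the counterexample showing that VIA is not estimation consistent, the
objective `E_VIA` attains a unique minimum over `[0,10]` at `θ* = 718/73 ≠ 10`. -/
theorem statement17 :
    (718 / 73 : ℝ) ∈ Icc (0 : ℝ) 10 ∧
    (∀ θ ∈ Icc (0 : ℝ) 10, θ ≠ 718 / 73 → EVIA (718 / 73) < EVIA θ) ∧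
    (718 / 73 : ℝ) ≠ 10 := by
  refine ⟨⟨by norm_num, by norm_num⟩, fun θ _ hne => ?_, by norm_num⟩
  rw [EVIA_minimizer]
  rcases le_or_gt θ 8 with h8 | h8
  · linarith [le_EVIA_of_le_eight h8]
  · have : 0 < (θ - 718 / 73) ^ 2 := sq_pos_iff.mpr (sub_ne_zero.mpr hne)
    rw [EVIA_eq_of_eight_lt h8]
    linarith
end
end
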